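/- arXiv:2005.02064 — 13 statements merged into one kernel-verified Lean document; each statement's English description precedes it below -/
import Mathlib

section
/- Let P = Σ_{j=0}^d a_j x^j be a real polynomial of degree d all of whose coefficients a_0, …, a_d are nonzero. Let c be the number of indices j with 1 ≤ j ≤ d and a_j·a_{j−1} < 0 (sign changes), and let pos be the number of positive real roots of P counted with multiplicity. Then pos ≤ c and c − pos is an even integer. -/
/-!
The bound `pos ≤ c` is Mathlib's rule of signs `Polynomial.roots_countP_pos_le_signVariations`,
since with all coefficients nonzero `signVariations` just counts adjacent sign changes.

For the parity, both numbers determine the sign of `P(0) · lead P = a₀ a_d`. Walking along the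
coefficients, each sign change flips the sign of `a₀ aⱼ`. On the other side, write
`P = ∏ (X - r) · Q` over the real roots `r`, with `Q` root-free; then `Q(0) · lead Q > 0` by the
intermediate value theorem, and `∏ (-r)` has sign `(-1)^pos`.
-/

open Polynomial Finset

theorem Nat.even_add_ite_iff (n : ℕ) (p : Prop) [Decidable p] :
    Even (n + if p then 1 else 0) ↔ (Even n ↔ ¬p) := by
  split_ifs <;> simp [Nat.even_add_one, *]

section OrderedRing

variable {R : Type*} [Ring R] [LinearOrder R]

def signChanges (a : ℕ → R) (d : ℕ) : ℕ :=
  #{j ∈ Icc 1 d | a j * a (j - 1) < 0}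

theorem signChanges_succ (a : ℕ → R) (d : ℕ) :
    signChanges a (d + 1) = signChanges a d + if a (d + 1) * a d < 0 then 1 else 0 := by
  simp only [signChanges, card_filter]
  rw [sum_Icc_succ_top (by omega), Nat.add_sub_cancel]

theorem signChanges_congr {a b : ℕ → R} {d : ℕ} (h : ∀ j ≤ d, a j = b j) :
    signChanges a d = signChanges b d := by
  unfold signChanges
  congr 1
  refine filter_congr fun j hj => ?_
  rw [mem_Icc] at hj
  rw [h j hj.2, h (j - 1) (by omega)]

theorem neg_iff_not_pos {a : R} (ha : a ≠ 0) : a < 0 ↔ ¬0 < a := by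
  rw [not_lt, ha.le_iff_lt]

variable [IsStrictOrderedRing R]

theorem mul_pos_iff_of_ne_zero {a b : R} (ha : a ≠ 0) (hb : b ≠ 0) :
    0 < a * b ↔ (0 < a ↔ 0 < b) := by
  grind [mul_pos_iff]

theorem sign_eq_neg_sign_iff_mul_neg {a b : R} (ha : a ≠ 0) (hb : b ≠ 0) :
    SignType.sign a = -SignType.sign b ↔ a * b < 0 := by
  rcases ha.lt_or_gt with ha | ha <;> rcases hb.lt_or_gt with hb | hb <;>
    simp [ha, hb, mul_neg_iff, ha.not_gt, hb.not_gt]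

theorem mul_pos_iff_even_signChanges {a : ℕ → R} {d : ℕ} (h : ∀ j ≤ d, a j ≠ 0) :
    0 < a 0 * a d ↔ Even (signChanges a d) := by
  induction d with
  | zero => simpa [signChanges] using mul_self_pos.2 (h 0 le_rfl)
  | succ d ih =>
    have h0 := h 0 (Nat.zero_le _)
    have hd := h d (by omega)
    have hd1 := h (d + 1) le_rfl
    rw [signChanges_succ, Nat.even_add_ite_iff, ← ih fun j hj => h j (by omega),
      neg_iff_not_pos (mul_ne_zero hd1 hd), mul_pos_iff_of_ne_zero h0 hd1,
      mul_pos_iff_of_ne_zero h0 hd, mul_pos_iff_of_ne_zero hd1 hd]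
    tauto

theorem Polynomial.signVariations_eq_signChanges {P : R[X]} {d : ℕ} (hdeg : P.natDegree = d)
    (h : ∀ j ≤ d, P.coeff j ≠ 0) : P.signVariations = signChanges P.coeff d := by
  induction d generalizing P with
  | zero =>
    rw [eq_C_of_natDegree_eq_zero hdeg, ← monomial_zero_left, signVariations_monomial]
    rfl
  | succ d ih =>
    have hP : P ≠ 0 := fun h0 => h 0 (Nat.zero_le _) (by simp [h0])
    have herase : ∀ j ≤ d, P.eraseLead.coeff j = P.coeff j := fun j hj =>
      eraseLead_coeff_of_ne j (by omega)
    have hdeg' : P.eraseLead.natDegree = d := le_antisymm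
      (by simpa [hdeg] using eraseLead_natDegree_le P)
      (le_natDegree_of_ne_zero (by rw [herase d le_rfl]; exact h d (by omega)))
    rw [signVariations_eq_eraseLead_add_ite hP, signChanges_succ,
      ih hdeg' fun j hj => herase j hj ▸ h j (by omega), signChanges_congr herase,
      leadingCoeff, leadingCoeff, hdeg, hdeg', herase d le_rfl]
    simp only [sign_eq_neg_sign_iff_mul_neg (h _ le_rfl) (h d (by omega))]

end OrderedRing

theorem Multiset.prod_pos_iff_even_countP_neg {R : Type*} [CommRing R] [LinearOrder R]
    [IsStrictOrderedRing R] {s : Multiset R} (hs : 0 ∉ s) :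
    0 < s.prod ↔ Even (s.countP (· < 0)) := by
  induction s using Multiset.induction_on with
  | empty => simp
  | cons a s ih =>
    rw [Multiset.mem_cons, not_or] at hs
    have ha : a ≠ 0 := Ne.symm hs.1
    rw [Multiset.prod_cons, Multiset.countP_cons, Nat.even_add_ite_iff, ← ih hs.2,
      neg_iff_not_pos ha, mul_pos_iff_of_ne_zero ha (Multiset.prod_ne_zero hs.2)]
    tauto

theorem Polynomial.eval_mul_leadingCoeff_pos_of_roots_eq_zero {Q : ℝ[X]} (hQ : Q ≠ 0)
    (hroots : Q.roots = 0) (x : ℝ) : 0 < Q.eval x * Q.leadingCoeff := by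
  have hno : ∀ y, Q.IsRoot y → y < x := fun y hy => by
    simpa [hroots] using (mem_roots hQ).2 hy
  rcases (leadingCoeff_ne_zero.2 hQ).lt_or_gt with hlc | hlc
  · exact mul_pos_of_neg_of_neg (eval_lt_zero_of_roots_lt_of_leadingCoeff_nonpos hno hlc.le) hlc
  · exact mul_pos (zero_lt_eval_of_roots_lt_of_leadingCoeff_nonneg hno hlc.le) hlc

theorem Polynomial.eval_zero_mul_leadingCoeff_pos_iff {P : ℝ[X]} (h0 : P.eval 0 ≠ 0) :
    0 < P.eval 0 * P.leadingCoeff ↔ Even (P.roots.countP (0 < ·)) := by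
  obtain ⟨Q, hPQ, -, hQ⟩ := exists_prod_multiset_X_sub_C_mul P
  have hQ0 : Q ≠ 0 := fun hQ0 => h0 (by rw [← hPQ, hQ0, mul_zero, eval_zero])
  have hmonic : (P.roots.map fun r => X - C r).prod.Monic :=
    monic_multiset_prod_of_monic _ _ fun r _ => monic_X_sub_C r
  have hsplit : P.eval 0 * P.leadingCoeff =
      (P.roots.map fun r => -r).prod * (Q.eval 0 * Q.leadingCoeff) := by
    conv_lhs => rw [← hPQ]
    rw [leadingCoeff_mul, hmonic.leadingCoeff, eval_mul, eval_multiset_prod, Multiset.map_map]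
    simp only [Function.comp_def, eval_sub, eval_X, eval_C, zero_sub]
    ring
  have hnz : (0 : ℝ) ∉ P.roots.map fun r => -r := by simp [IsRoot, h0]
  rw [hsplit, mul_pos_iff_of_pos_right (eval_mul_leadingCoeff_pos_of_roots_eq_zero hQ0 hQ 0),
    Multiset.prod_pos_iff_even_countP_neg hnz, Multiset.countP_map,
    ← Multiset.countP_eq_card_filter]
  simp

/-- Descartes' rule of signs (with Fourier's completion) for positive roots:
for a real polynomial of degree `d` with all coefficients nonzero, the number `pos`
of positive roots counted with multiplicity satisfies `pos ≤ c` and `c - pos` is even,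
where `c` is the number of sign changes in the sequence of coefficients. -/
theorem descartes_positive_roots (d : ℕ) (P : Polynomial ℝ)
    (hdeg : P.natDegree = d)
    (hnz : ∀ j ≤ d, P.coeff j ≠ 0)
    (c pos : ℕ)
    (hc : c = ((Finset.Icc 1 d).filter
      (fun j => P.coeff j * P.coeff (j - 1) < 0)).card)
    (hpos : pos = (P.roots.filter (fun x => 0 < x)).card) :
    pos ≤ c ∧ Even (c - pos) := by
  have h0 : P.eval 0 ≠ 0 := coeff_zero_eq_eval_zero P ▸ hnz 0 d.zero_le
  have hc' : c = signChanges P.coeff d := hc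
  rw [← Multiset.countP_eq_card_filter] at hpos
  have hle : pos ≤ c := by
    rw [hpos, hc', ← signVariations_eq_signChanges hdeg hnz]
    exact roots_countP_pos_le_signVariations P
  have hparity : Even c ↔ Even pos := by
    rw [hc', hpos, ← mul_pos_iff_even_signChanges hnz, ← eval_zero_mul_leadingCoeff_pos_iff h0,
      coeff_zero_eq_eval_zero, ← hdeg, coeff_natDegree]
  exact ⟨hle, (Nat.even_sub hle).2 hparity⟩
end

section
/- There exists no monic real polynomial P = x^5 + a_4 x^4 + a_3 x^3 + a_2 x^2 + a_1 x + a_0 with a_4 > 0, a_3 < 0, a_2 > 0, a_1 < 0, a_0 < 0 that has three distinct positive real roots and no negative real root. -/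
open Polynomial

private lemma aux_ppmpmm (r1 r2 r3 b c : ℝ) (hr1 : 0 < r1) (hr2 : 0 < r2) (hr3 : 0 < r3)
    (ha4 : 0 < b - (r1 + r2 + r3))
    (ha2 : 0 < (r1*r2 + r1*r3 + r2*r3) * b - (r1 + r2 + r3) * c - r1*r2*r3)
    (ha1 : (r1*r2 + r1*r3 + r2*r3) * c - r1*r2*r3 * b < 0)
    (hdisc : b ^ 2 < 4 * c) : False := by
  set S1 := r1 + r2 + r3 with hS1
  set S2 := r1*r2 + r1*r3 + r2*r3 with hS2
  set S3 := r1*r2*r3 with hS3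
  have hS1pos : 0 < S1 := by positivity
  have hS2pos : 0 < S2 := by positivity
  have hS3pos : 0 < S3 := by positivity
  have hbS : S1 < b := by linarith
  have hbpos : 0 < b := hS1pos.trans hbS
  have hcpos : 0 < c := by nlinarith [sq_nonneg b]
  have h1 : S1 * c + S3 < S2 * b := by linarith
  have h2 : S2 * c < S3 * b := by linarith
  have h1b : (S1 * c + S3) * b < S2 * b * b := mul_lt_mul_of_pos_right h1 hbpos
  have h4 : S2 * (b * b) < S2 * (4 * c) := by nlinarith
  have h5 : (S1 * b) * c < (3 * S2) * c := by nlinarith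
  have h5' : S1 * b < 3 * S2 := lt_of_mul_lt_mul_right h5 hcpos.le
  have h6 : S1 * S1 < S1 * b := mul_lt_mul_of_pos_left hbS hS1pos
  have h7 : 3 * S2 ≤ S1 * S1 := by
    have e : S1 * S1 - 3 * S2 = ((r1-r2)^2 + (r1-r3)^2 + (r2-r3)^2)/2 := by
      rw [hS1, hS2]; ring
    nlinarith [sq_nonneg (r1-r2), sq_nonneg (r1-r3), sq_nonneg (r2-r3)]
  linarith

set_option maxHeartbeats 1600000 in
/-- (Albouy–Fu) There is no monic real degree 5 polynomial with sign pattern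
`(+,+,-,+,-,-)` having three distinct (simple) positive roots and no negative root. -/
theorem no_deg5_sp_ppmpmm_ap30 :
    ¬ ∃ (a4 a3 a2 a1 a0 : ℝ) (P : Polynomial ℝ),
      0 < a4 ∧ a3 < 0 ∧ 0 < a2 ∧ a1 < 0 ∧ a0 < 0 ∧
      P = X ^ 5 + C a4 * X ^ 4 + C a3 * X ^ 3 + C a2 * X ^ 2 + C a1 * X + C a0 ∧
      (P.roots.filter (fun x => 0 < x)).card = 3 ∧
      (P.roots.filter (fun x => 0 < x)).Nodup ∧
      (∀ x : ℝ, x < 0 → ¬ P.IsRoot x) := by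
  rintro ⟨a4, a3, a2, a1, a0, P, ha4, ha3, ha2, ha1, ha0, hP, hcard, hnodup, hneg⟩
  have hPmonic : P.Monic := by rw [hP]; monicity!
  have hPdeg : P.natDegree = 5 := by rw [hP]; compute_degree!
  have hP0 : P ≠ 0 := hPmonic.ne_zero
  -- extract the three positive roots
  obtain ⟨r1, r2, r3, hM⟩ := Multiset.card_eq_three.mp hcard
  have hmem : ∀ r ∈ (P.roots.filter (fun x => 0 < x)), 0 < r := by
    intro r hr; exact (Multiset.mem_filter.mp hr).2
  have hr1 : 0 < r1 := hmem r1 (by rw [hM]; simp)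
  have hr2 : 0 < r2 := hmem r2 (by rw [hM]; simp)
  have hr3 : 0 < r3 := hmem r3 (by rw [hM]; simp)
  -- the cubic divides P
  set cubic : Polynomial ℝ := (X - C r1) * ((X - C r2) * (X - C r3)) with hcubic
  have hcdvd : cubic ∣ P := by
    have h1 : ((P.roots.filter (fun x => 0 < x)).map (fun r => X - C r)).prod ∣
        (P.roots.map (fun r => X - C r)).prod :=
      Multiset.prod_dvd_prod_of_le (Multiset.map_le_map (Multiset.filter_le _ _))
    have h2 := prod_multiset_X_sub_C_dvd P
    have h3 : ((P.roots.filter (fun x => 0 < x)).map (fun r => X - C r)).prod = cubic := by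
      rw [hM]; simp [hcubic, Multiset.map_cons, Multiset.prod_cons]
    rw [h3] at h1
    exact h1.trans h2
  obtain ⟨Q, hPQ⟩ := hcdvd
  have hcmonic : cubic.Monic :=
    ((monic_X_sub_C r1).mul ((monic_X_sub_C r2).mul (monic_X_sub_C r3)))
  have hQmonic : Q.Monic := hcmonic.of_mul_monic_left (hPQ ▸ hPmonic)
  have hcdeg : cubic.natDegree = 3 := by rw [hcubic]; compute_degree!
  have hQdeg : Q.natDegree = 2 := by
    have := hPQ ▸ hPdeg
    rw [hcmonic.natDegree_mul hQmonic, hcdeg] at this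
    omega
  set b := Q.coeff 1 with hb
  set c := Q.coeff 0 with hc
  have hQeq : Q = X ^ 2 + C b * X + C c := by
    ext n
    match n with
    | 0 => simp [hc]
    | 1 => simp [hb, coeff_X_pow]
    | 2 =>
      have h2 : Q.coeff 2 = 1 := by
        have := hQmonic.coeff_natDegree; rwa [hQdeg] at this
      simp [h2, coeff_X_pow, coeff_X, coeff_C]
    | (n+3) =>
      rw [coeff_eq_zero_of_natDegree_lt (by omega : Q.natDegree < n + 3)]
      simp [coeff_X_pow, coeff_X, coeff_C]
  -- Q has no real root
  have hQnoroot : ∀ x : ℝ, Q.eval x ≠ 0 := by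
    intro x hx
    have hQne : Q ≠ 0 := hQmonic.ne_zero
    have hxQ : x ∈ Q.roots := by rw [mem_roots hQne]; exact hx
    have hroots : P.roots = cubic.roots + Q.roots := by
      rw [hPQ, roots_mul (hPQ ▸ hP0)]
    have hcroots : cubic.roots = {r1, r2, r3} := by
      rw [hcubic, roots_mul (by exact (hcmonic.ne_zero : cubic ≠ 0)),
        roots_mul (mul_ne_zero (X_sub_C_ne_zero r2) (X_sub_C_ne_zero r3))]
      simp [roots_X_sub_C]
      exact Multiset.cons_swap r2 r1 {r3}
    -- x is positive
    have hxP : P.eval x = 0 := by rw [hPQ]; simp [hx]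
    have hx0 : x ≠ 0 := by
      rintro rfl
      rw [hP] at hxP; simp at hxP
      exact absurd hxP (ne_of_lt ha0)
    have hxpos : 0 < x := by
      rcases lt_trichotomy x 0 with h | h | h
      · exact absurd hxP (hneg x h)
      · exact absurd h hx0
      · exact h
    -- count positive roots
    rw [hroots, Multiset.filter_add, Multiset.card_add, hcroots] at hcard
    have hc3 : (Multiset.filter (fun x => 0 < x) ({r1, r2, r3} : Multiset ℝ)).card = 3 := by
      rw [show ({r1, r2, r3} : Multiset ℝ) = r1 ::ₘ r2 ::ₘ {r3} from rfl]
      rw [Multiset.filter_cons_of_pos _ hr1, Multiset.filter_cons_of_pos _ hr2]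
      simp [Multiset.filter_singleton, hr3]
    have hxmem : x ∈ Multiset.filter (fun x => 0 < x) Q.roots :=
      Multiset.mem_filter.mpr ⟨hxQ, hxpos⟩
    have := Multiset.card_pos_iff_exists_mem.mpr ⟨x, hxmem⟩
    omega
  -- hence discriminant negative : b^2 < 4c
  have hdisc : b ^ 2 < 4 * c := by
    by_contra h
    push_neg at h
    have hnn : 0 ≤ b ^ 2 - 4 * c := by linarith
    set x := (-b + Real.sqrt (b ^ 2 - 4 * c)) / 2 with hx
    have hs := Real.sq_sqrt hnn
    have : Q.eval x = 0 := by
      rw [hQeq]; simp [hx]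
      nlinarith [hs]
    exact hQnoroot x this
  -- Vieta: compare coefficients
  have key : X ^ 5 + C a4 * X ^ 4 + C a3 * X ^ 3 + C a2 * X ^ 2 + C a1 * X + C a0 =
      X ^ 5 + C (b - (r1 + r2 + r3)) * X ^ 4
        + C (c - (r1 + r2 + r3) * b + (r1*r2 + r1*r3 + r2*r3)) * X ^ 3
        + C ((r1*r2 + r1*r3 + r2*r3) * b - (r1 + r2 + r3) * c - r1*r2*r3) * X ^ 2
        + C ((r1*r2 + r1*r3 + r2*r3) * c - r1*r2*r3 * b) * X
        + C (-(r1*r2*r3) * c) := by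
    rw [← hP, hPQ, hQeq, hcubic]
    simp only [map_sub, map_add, map_mul, map_neg, map_ofNat]
    ring
  have e4 : a4 = b - (r1 + r2 + r3) := by
    have h := congrArg (fun p => Polynomial.coeff p 4) key
    simp only [coeff_add, coeff_C_mul, coeff_X_pow, coeff_C, coeff_X] at h
    norm_num at h
    exact h
  have e3 : a3 = c - (r1 + r2 + r3) * b + (r1*r2 + r1*r3 + r2*r3) := by
    have h := congrArg (fun p => Polynomial.coeff p 3) key
    simp only [coeff_add, coeff_C_mul, coeff_X_pow, coeff_C, coeff_X] at h
    norm_num at h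
    exact h
  have e2 : a2 = (r1*r2 + r1*r3 + r2*r3) * b - (r1 + r2 + r3) * c - r1*r2*r3 := by
    have h := congrArg (fun p => Polynomial.coeff p 2) key
    simp only [coeff_add, coeff_C_mul, coeff_X_pow, coeff_C, coeff_X] at h
    norm_num at h
    exact h
  have e1 : a1 = (r1*r2 + r1*r3 + r2*r3) * c - r1*r2*r3 * b := by
    have h := congrArg (fun p => Polynomial.coeff p 1) key
    simp only [coeff_add, coeff_C_mul, coeff_X_pow, coeff_C, coeff_X] at h
    norm_num at h
    exact h
  -- final contradiction
  rw [e2] at ha2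
  rw [e1] at ha1
  rw [e4] at ha4
  exact aux_ppmpmm r1 r2 r3 b c hr1 hr2 hr3 (by linarith) (by linarith) (by linarith) hdisc
end

section
/- There exists no monic real polynomial P = x^5 + a_4 x^4 + a_3 x^3 + a_2 x^2 + a_1 x + a_0 with a_4 < 0, a_3 < 0, a_2 < 0, a_1 < 0, a_0 > 0 that has three distinct negative real roots and no positive real root. -/
open Polynomial

lemma quad_form (Q : Polynomial ℝ) (hm : Q.Monic) (hd : Q.natDegree = 2) :
    Q = X ^ 2 + C (Q.coeff 1) * X + C (Q.coeff 0) := by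
  ext n
  have hlc : Q.coeff 2 = 1 := by
    have := hm.leadingCoeff
    rwa [leadingCoeff, hd] at this
  match n with
  | 0 => simp
  | 1 => simp
  | 2 => simp [hlc, coeff_X_pow]
  | (n+3) =>
    rw [Polynomial.coeff_eq_zero_of_natDegree_lt (by omega)]
    simp [coeff_X_pow, coeff_C]

lemma key_ineq (s1 s2 s3 p q : ℝ) (hs2 : 0 < s2) (hs3 : 0 < s3)
    (hamgm : 9 * s3 ≤ s1 * s2) (hp1 : s1 < -p) (hs1 : 0 < s1)
    (hA : s2 * q + s3 * p < 0) (hdisc : p ^ 2 < 4 * q) : False := by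
  have hpneg : 0 < -p := lt_trans hs1 hp1
  have h5 : s2 * p ^ 2 < 4 * (s3 * (-p)) := by
    nlinarith [mul_lt_mul_of_pos_left hdisc hs2]
  have h6 : s2 * (-p) < 4 * s3 := by
    nlinarith [h5, hpneg, mul_pos hs2 hpneg]
  have h7 : s1 * s2 < 4 * s3 := by
    nlinarith [mul_lt_mul_of_pos_left hp1 hs2]
  linarith

set_option maxHeartbeats 1600000 in
/-- (Albouy–Fu) There is no monic real degree 5 polynomial with sign pattern
`(+,-,-,-,-,+)` having three distinct (simple) negative roots and no positive root. -/
theorem no_deg5_sp_pmmmmp_ap03 :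
    ¬ ∃ (a4 a3 a2 a1 a0 : ℝ) (P : Polynomial ℝ),
      a4 < 0 ∧ a3 < 0 ∧ a2 < 0 ∧ a1 < 0 ∧ 0 < a0 ∧
      P = X ^ 5 + C a4 * X ^ 4 + C a3 * X ^ 3 + C a2 * X ^ 2 + C a1 * X + C a0 ∧
      (P.roots.filter (fun x => x < 0)).card = 3 ∧
      (P.roots.filter (fun x => x < 0)).Nodup ∧
      (∀ x : ℝ, 0 < x → ¬ P.IsRoot x) := by
  rintro ⟨a4, a3, a2, a1, a0, P, h4, h3, h2, h1, h0, hP, hcard, hnodup, hpos⟩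
  obtain ⟨r1, r2, r3, hM⟩ := Multiset.card_eq_three.mp hcard
  have hmem : ∀ r ∈ ({r1, r2, r3} : Multiset ℝ), r ∈ P.roots ∧ r < 0 := by
    intro r hr
    rw [← hM] at hr
    exact ⟨Multiset.mem_of_mem_filter hr, (Multiset.mem_filter.mp hr).2⟩
  have hr1 := hmem r1 (by simp)
  have hr2 := hmem r2 (by simp)
  have hr3 := hmem r3 (by simp)
  have hle : ({r1, r2, r3} : Multiset ℝ) ≤ P.roots := by
    rw [← hM]; exact Multiset.filter_le _ _
  have hdvd : (X - C r1) * (X - C r2) * (X - C r3) ∣ P := by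
    have hd1 : (Multiset.map (fun a => X - C a) ({r1, r2, r3} : Multiset ℝ)).prod ∣
        (Multiset.map (fun a => X - C a) P.roots).prod :=
      Multiset.prod_dvd_prod_of_le (Multiset.map_le_map hle)
    have hd2 := (hd1.trans (Polynomial.prod_multiset_X_sub_C_dvd P))
    simpa [mul_assoc] using hd2
  obtain ⟨Q, hQ⟩ := hdvd
  have hPmonic : P.Monic := by
    rw [hP]; monicity!
  have hPdeg : P.natDegree = 5 := by
    rw [hP]; compute_degree!
  have hdmonic : ((X - C r1) * (X - C r2) * (X - C r3)).Monic :=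
    ((monic_X_sub_C r1).mul (monic_X_sub_C r2)).mul (monic_X_sub_C r3)
  have hddeg : ((X - C r1) * (X - C r2) * (X - C r3)).natDegree = 3 := by
    compute_degree!
  have hQ0 : Q ≠ 0 := by
    rintro rfl
    rw [mul_zero] at hQ
    exact hPmonic.ne_zero hQ
  have hQdeg : Q.natDegree = 2 := by
    have := Polynomial.natDegree_mul hdmonic.ne_zero hQ0
    rw [← hQ] at this
    omega
  have hQmonic : Q.Monic := by
    have := leadingCoeff_mul ((X - C r1) * (X - C r2) * (X - C r3)) Q
    rw [← hQ, hPmonic.leadingCoeff, hdmonic.leadingCoeff, one_mul] at this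
    exact this.symm
  obtain ⟨p, q, hQform⟩ : ∃ p q, Q = X ^ 2 + C p * X + C q :=
    ⟨_, _, quad_form Q hQmonic hQdeg⟩
  have hid : X ^ 5 + C a4 * X ^ 4 + C a3 * X ^ 3 + C a2 * X ^ 2 + C a1 * X + C a0
      = X ^ 5 + C (p - (r1 + r2 + r3)) * X ^ 4
        + C (q - (r1 + r2 + r3) * p + (r1*r2 + r1*r3 + r2*r3)) * X ^ 3
        + C (-(r1 + r2 + r3) * q + (r1*r2 + r1*r3 + r2*r3) * p - r1*r2*r3) * X ^ 2
        + C ((r1*r2 + r1*r3 + r2*r3) * q - r1*r2*r3 * p) * X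
        + C (-(r1*r2*r3) * q) := by
    rw [← hP, hQ, hQform]
    simp only [map_add, map_sub, map_mul, map_neg]
    ring
  have e4 : a4 = p - (r1 + r2 + r3) := by
    have := congrArg (fun f => Polynomial.coeff f 4) hid
    simp only [coeff_add, coeff_C_mul, coeff_X_pow, coeff_C, coeff_X] at this
    norm_num at this
    exact this
  have e1 : a1 = (r1*r2 + r1*r3 + r2*r3) * q - r1*r2*r3 * p := by
    have := congrArg (fun f => Polynomial.coeff f 1) hid
    simp only [coeff_add, coeff_C_mul, coeff_X_pow, coeff_C, coeff_X] at this
    norm_num at this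
    exact this
  have e0 : a0 = -(r1*r2*r3) * q := by
    have := congrArg (fun f => Polynomial.coeff f 0) hid
    simp only [coeff_add, coeff_C_mul, coeff_X_pow, coeff_C, coeff_X] at this
    norm_num at this
    linarith [this]
  have hb1 : 0 < -r1 := by linarith [hr1.2]
  have hb2 : 0 < -r2 := by linarith [hr2.2]
  have hb3 : 0 < -r3 := by linarith [hr3.2]
  have hs3 : 0 < -(r1*r2*r3) := by nlinarith [mul_pos (mul_pos hb1 hb2) hb3]
  have hq0 : 0 < q := by
    rw [e0] at h0
    nlinarith
  have hpneg : p < 0 := by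
    linarith [hr1.2, hr2.2, hr3.2, e4, h4]
  have hdisc : p ^ 2 < 4 * q := by
    by_contra hcon
    push_neg at hcon
    set x := (-p + Real.sqrt (p ^ 2 - 4 * q)) / 2 with hx
    have hsq : Real.sqrt (p ^ 2 - 4 * q) ^ 2 = p ^ 2 - 4 * q :=
      Real.sq_sqrt (by linarith)
    have hxroot : x ^ 2 + p * x + q = 0 := by
      rw [hx]; field_simp; nlinarith [hsq]
    have hxpos : 0 < x := by
      have := Real.sqrt_nonneg (p ^ 2 - 4 * q)
      rw [hx]; linarith
    apply hpos x hxpos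
    have heval : P.eval x = (x - r1) * (x - r2) * (x - r3) * (x ^ 2 + p * x + q) := by
      rw [hQ, hQform]
      simp only [eval_mul, eval_add, eval_sub, eval_pow, eval_X, eval_C]
    show P.eval x = 0
    rw [heval, hxroot, mul_zero]
  -- final contradiction via AM-GM
  clear hid hQform hP hM hmem hle hPmonic hPdeg hdmonic hddeg hQ0 hQdeg hQmonic hcard hnodup hpos hr1 hr2 hr3 hQ
  clear P Q
  refine key_ineq ((-r1) + (-r2) + (-r3)) (r1*r2 + r1*r3 + r2*r3) (-(r1*r2*r3)) p q
    ?_ hs3 ?_ (by linarith [e4, h4]) (by linarith) ?_ ?_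
  · nlinarith [mul_pos hb1 hb2, mul_pos hb1 hb3, mul_pos hb2 hb3]
  · nlinarith [mul_nonneg hb3.le (sq_nonneg (r1 - r2)), mul_nonneg hb1.le (sq_nonneg (r2 - r3)),
      mul_nonneg hb2.le (sq_nonneg (r1 - r3))]
  · nlinarith [e1, h1]
  · exact hdisc
end

section
/- There exists no monic real polynomial P = x^4 + a_3 x^3 + a_2 x^2 + a_1 x + a_0 with a_3 > 0, a_2 < 0, a_1 > 0, a_0 > 0 that has two distinct positive real roots and no negative real root. -/
open Polynomial

/-- (Grabiner) There is no monic real degree 4 polynomial with sign pattern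
`(+,+,-,+,+)` having two distinct (simple) positive roots and no negative root. -/
theorem no_deg4_sp_ppmpp_ap20 :
    ¬ ∃ (a3 a2 a1 a0 : ℝ) (P : Polynomial ℝ),
      0 < a3 ∧ a2 < 0 ∧ 0 < a1 ∧ 0 < a0 ∧
      P = X ^ 4 + C a3 * X ^ 3 + C a2 * X ^ 2 + C a1 * X + C a0 ∧
      (P.roots.filter (fun x => 0 < x)).card = 2 ∧
      (P.roots.filter (fun x => 0 < x)).Nodup ∧
      (∀ x : ℝ, x < 0 → ¬ P.IsRoot x) := by
  rintro ⟨a3, a2, a1, a0, P, ha3, ha2, ha1, ha0, hP, hcard, hnodup, hneg⟩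
  have hPm : P.Monic := by rw [hP]; monicity!
  have hPdeg : P.natDegree = 4 := by rw [hP]; compute_degree!
  have hP0 : P ≠ 0 := hPm.ne_zero
  -- extract the two distinct positive roots
  obtain ⟨r, s, hrs⟩ := Multiset.card_eq_two.mp hcard
  have hrmem : r ∈ P.roots.filter (fun x => 0 < x) := by rw [hrs]; simp
  have hsmem : s ∈ P.roots.filter (fun x => 0 < x) := by rw [hrs]; simp
  have hr0 : (0:ℝ) < r := (Multiset.mem_filter.mp hrmem).2
  have hs0 : (0:ℝ) < s := (Multiset.mem_filter.mp hsmem).2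
  have hrroot : P.IsRoot r := isRoot_of_mem_roots (Multiset.mem_filter.mp hrmem).1
  have hsroot : P.IsRoot s := isRoot_of_mem_roots (Multiset.mem_filter.mp hsmem).1
  have hne : r ≠ s := by
    rw [hrs] at hnodup
    intro h; subst h
    simp [Multiset.nodup_iff_count_le_one] at hnodup
    exact absurd (hnodup r) (by simp)
  -- factor P
  have hcop : IsCoprime (X - C r) (X - C s) :=
    isCoprime_X_sub_C_of_isUnit_sub (sub_ne_zero_of_ne hne).isUnit
  have hdvd : (X - C r) * (X - C s) ∣ P :=
    hcop.mul_dvd (dvd_iff_isRoot.mpr hrroot) (dvd_iff_isRoot.mpr hsroot)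
  obtain ⟨Q, hQ⟩ := hdvd
  have hlin : ((X - C r) * (X - C s)).Monic := (monic_X_sub_C r).mul (monic_X_sub_C s)
  have hQm : Q.Monic := hlin.of_mul_monic_left (hQ ▸ hPm)
  have hQ0 : Q ≠ 0 := hQm.ne_zero
  have hQdeg : Q.natDegree = 2 := by
    have := hQ ▸ hPdeg
    rw [natDegree_mul (hlin.ne_zero) hQ0, natDegree_mul (X_sub_C_ne_zero r) (X_sub_C_ne_zero s),
      natDegree_X_sub_C, natDegree_X_sub_C] at this
    omega
  set b := Q.coeff 1 with hb
  set c := Q.coeff 0 with hc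
  have hQeq : Q = X ^ 2 + C b * X + C c := by
    ext n
    rcases n with _ | _ | _ | n
    · simp [hc]
    · simp [hb, coeff_X_pow]
    · have : Q.coeff 2 = 1 := by
        have := hQm.leadingCoeff
        rwa [leadingCoeff, hQdeg] at this
      simp [this, coeff_X_pow]
    · have h1 : Q.coeff (n+3) = 0 := coeff_eq_zero_of_natDegree_lt (by omega)
      have h2 : ((X:ℝ[X]) ^ 2 + C b * X + C c).coeff (n+3) = 0 := by
        simp [coeff_X_pow, coeff_X, coeff_C]
      rw [h1, h2]
  -- coefficient relations
  have hid : X ^ 4 + C a3 * X ^ 3 + C a2 * X ^ 2 + C a1 * X + C a0 =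
      X ^ 4 + C (b - r - s) * X ^ 3 + C (c - (r + s) * b + r * s) * X ^ 2 +
        C (r * s * b - (r + s) * c) * X + C (r * s * c) := by
    rw [← hP, hQ, hQeq]
    simp only [C_sub, C_add, C_mul]
    ring
  have e3 : a3 = b - r - s := by
    have := congrArg (fun p => Polynomial.coeff p 3) hid
    simp only [coeff_add, coeff_sub, coeff_C_mul, coeff_X_pow, coeff_C, coeff_X, C_sub, C_add,
      C_mul, sub_mul, add_mul, mul_assoc, coeff_mul_X] at this
    norm_num at this
    linarith
  have e1 : a1 = r * s * b - (r + s) * c := by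
    have := congrArg (fun p => Polynomial.coeff p 1) hid
    simp only [coeff_add, coeff_sub, coeff_C_mul, coeff_X_pow, coeff_C, coeff_X, C_sub, C_add,
      C_mul, sub_mul, add_mul, mul_assoc, coeff_mul_X] at this
    norm_num at this
    linarith
  have e0 : a0 = r * s * c := by
    have := congrArg (fun p => Polynomial.coeff p 0) hid
    simpa [coeff_X_pow, coeff_C] using this
  -- Q has no real roots
  have hQnoroot : ∀ t : ℝ, t ^ 2 + b * t + c ≠ 0 := by
    intro t ht
    have hQroot : Q.IsRoot t := by rw [hQeq]; simp [IsRoot, ht]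
    have hProot : P.IsRoot t := by
      rw [hQ]; simp [IsRoot] at hQroot ⊢; right; exact hQroot
    rcases lt_trichotomy t 0 with h | h | h
    · exact hneg t h hProot
    · subst h
      have : c = 0 := by simpa using ht
      rw [this] at e0; nlinarith
    · -- t would be a third positive root
      have hroots : P.roots = {r} + {s} + Q.roots := by
        rw [hQ, roots_mul (hQ ▸ hP0), roots_mul (hlin.ne_zero), roots_X_sub_C, roots_X_sub_C]
      have htmem : t ∈ Q.roots := (mem_roots hQ0).mpr hQroot
      have : 3 ≤ (P.roots.filter (fun x => 0 < x)).card := by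
        rw [hroots]
        rw [Multiset.filter_add, Multiset.filter_add, Multiset.card_add, Multiset.card_add]
        have h1 : Multiset.card (Multiset.filter (fun x => 0 < x) {r}) = 1 := by
          simp [Multiset.filter_singleton, hr0]
        have h2 : Multiset.card (Multiset.filter (fun x => 0 < x) {s}) = 1 := by
          simp [Multiset.filter_singleton, hs0]
        have h3 : 1 ≤ Multiset.card (Multiset.filter (fun x => 0 < x) Q.roots) := by
          exact Multiset.card_pos_iff_exists_mem.mpr ⟨t, Multiset.mem_filter.mpr ⟨htmem, h⟩⟩
        omega
      omega
  -- discriminant negative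
  have hdisc : b ^ 2 < 4 * c := by
    by_contra hle
    push_neg at hle
    set t := (-b + Real.sqrt (b ^ 2 - 4 * c)) / 2 with htdef
    have hsq : Real.sqrt (b ^ 2 - 4 * c) ^ 2 = b ^ 2 - 4 * c :=
      Real.sq_sqrt (by linarith)
    exact hQnoroot t (by rw [htdef]; nlinarith [hsq])
  -- final contradiction
  have hbpos : r + s < b := by linarith
  have hrsne : r - s ≠ 0 := sub_ne_zero_of_ne hne
  have hrs2 : (0:ℝ) < (r - s) ^ 2 := by positivity
  nlinarith [mul_pos hr0 hs0, mul_pos (add_pos hr0 hs0) (show (0:ℝ) < b by linarith),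
    mul_lt_mul_of_pos_left hdisc (show (0:ℝ) < r + s by linarith)]
end

section
/- For every degree d with 1 ≤ d ≤ 3, every sign pattern σ = (σ_d, …, σ_0) of degree d, and every pair (pos, neg) admissible for σ, the couple (σ, (pos, neg)) is realizable: there exists a monic real polynomial of degree d with sign pattern σ having exactly pos positive and exactly neg negative real roots, all of its real roots being simple. -/
open Polynomial

/-- A monic real polynomial of degree `d`, all of whose coefficients are nonzero with
signs given by `σ`, having exactly `pos` positive and `neg` negative roots, all of its
real roots being simple. -/
def Realizable (d : ℕ) (σ : ℕ → ℤ) (pos neg : ℕ) : Prop :=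
  ∃ P : Polynomial ℝ, P.Monic ∧ P.natDegree = d ∧
    (∀ j ≤ d, (σ j = 1 ∧ 0 < P.coeff j) ∨ (σ j = -1 ∧ P.coeff j < 0)) ∧
    (P.roots.filter (fun x => 0 < x)).card = pos ∧
    (P.roots.filter (fun x => x < 0)).card = neg ∧
    P.roots.Nodup

/-- A monic quadratic with negative discriminant has no real roots. -/
lemma quad_roots_nil (q1 q2 : ℝ) (h : q1 ^ 2 < 4 * q2) :
    (X ^ 2 + C q1 * X + C q2 : ℝ[X]).roots = 0 := by
  apply Multiset.eq_zero_of_forall_notMem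
  intro x hx
  have hne : (X ^ 2 + C q1 * X + C q2 : ℝ[X]) ≠ 0 := by
    apply Monic.ne_zero; monicity!
  have := (mem_roots hne).mp hx
  rw [IsRoot, eval_add, eval_add, eval_pow, eval_mul, eval_C, eval_X, eval_C] at this
  nlinarith [sq_nonneg (2 * x + q1)]

lemma quad_ne_zero (q1 q2 : ℝ) : (X ^ 2 + C q1 * X + C q2 : ℝ[X]) ≠ 0 := by
  apply Monic.ne_zero; monicity!

/-- Degree 1 realization. -/
lemma real_d1 (σ : ℕ → ℤ) (pos neg : ℕ) (r : ℝ)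
    (h1 : σ 1 = 1)
    (h0 : σ 0 = 1 ∧ 0 < -r ∨ σ 0 = -1 ∧ -r < 0)
    (hpos : (({r} : Multiset ℝ).filter (fun x => 0 < x)).card = pos)
    (hneg : (({r} : Multiset ℝ).filter (fun x => x < 0)).card = neg) :
    Realizable 1 σ pos neg := by
  have hroots : (X - C r : ℝ[X]).roots = {r} := roots_X_sub_C r
  refine ⟨X - C r, monic_X_sub_C r, natDegree_X_sub_C r, ?_, ?_, ?_, ?_⟩
  · intro j hj
    interval_cases j
    · simpa using h0
    · exact Or.inl ⟨h1, by norm_num⟩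
  · rw [hroots]; exact hpos
  · rw [hroots]; exact hneg
  · rw [hroots]; exact Multiset.nodup_singleton r

/-- Degree 2 realization with two real roots. -/
lemma real_d2 (σ : ℕ → ℤ) (pos neg : ℕ) (a b r1 r2 : ℝ)
    (hfac : (X - C r1) * (X - C r2) = X ^ 2 + C a * X + C b)
    (h2 : σ 2 = 1)
    (h1 : σ 1 = 1 ∧ 0 < a ∨ σ 1 = -1 ∧ a < 0)
    (h0 : σ 0 = 1 ∧ 0 < b ∨ σ 0 = -1 ∧ b < 0)
    (hpos : (({r1, r2} : Multiset ℝ).filter (fun x => 0 < x)).card = pos)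
    (hneg : (({r1, r2} : Multiset ℝ).filter (fun x => x < 0)).card = neg)
    (hnd : ({r1, r2} : Multiset ℝ).Nodup) :
    Realizable 2 σ pos neg := by
  have hroots : (X ^ 2 + C a * X + C b : ℝ[X]).roots = {r1, r2} := by
    rw [← hfac, roots_mul (mul_ne_zero (X_sub_C_ne_zero r1) (X_sub_C_ne_zero r2)),
      roots_X_sub_C, roots_X_sub_C]
    rfl
  refine ⟨X ^ 2 + C a * X + C b, by monicity!, by compute_degree!, ?_, ?_, ?_, ?_⟩
  · intro j hj
    interval_cases j
    · simpa [coeff_X_pow] using h0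
    · simpa [coeff_X_pow] using h1
    · exact Or.inl ⟨h2, by norm_num [coeff_X_pow]⟩
  · rw [hroots]; exact hpos
  · rw [hroots]; exact hneg
  · rw [hroots]; exact hnd

/-- Degree 2 realization with no real roots. -/
lemma real_d2q (σ : ℕ → ℤ) (q1 q2 : ℝ)
    (hdisc : q1 ^ 2 < 4 * q2)
    (h2 : σ 2 = 1)
    (h1 : σ 1 = 1 ∧ 0 < q1 ∨ σ 1 = -1 ∧ q1 < 0)
    (h0 : σ 0 = 1 ∧ 0 < q2 ∨ σ 0 = -1 ∧ q2 < 0) :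
    Realizable 2 σ 0 0 := by
  have hroots : (X ^ 2 + C q1 * X + C q2 : ℝ[X]).roots = 0 := quad_roots_nil q1 q2 hdisc
  refine ⟨X ^ 2 + C q1 * X + C q2, by monicity!, by compute_degree!, ?_, ?_, ?_, ?_⟩
  · intro j hj
    interval_cases j
    · simpa [coeff_X_pow] using h0
    · simpa [coeff_X_pow] using h1
    · exact Or.inl ⟨h2, by norm_num [coeff_X_pow]⟩
  · rw [hroots]; rfl
  · rw [hroots]; rfl
  · rw [hroots]; exact Multiset.nodup_zero

/-- Degree 3 realization with three real roots. -/
lemma real_d3 (σ : ℕ → ℤ) (pos neg : ℕ) (a b c r1 r2 r3 : ℝ)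
    (hfac : (X - C r1) * ((X - C r2) * (X - C r3)) = X ^ 3 + C a * X ^ 2 + C b * X + C c)
    (h3 : σ 3 = 1)
    (h2 : σ 2 = 1 ∧ 0 < a ∨ σ 2 = -1 ∧ a < 0)
    (h1 : σ 1 = 1 ∧ 0 < b ∨ σ 1 = -1 ∧ b < 0)
    (h0 : σ 0 = 1 ∧ 0 < c ∨ σ 0 = -1 ∧ c < 0)
    (hpos : (({r1, r2, r3} : Multiset ℝ).filter (fun x => 0 < x)).card = pos)
    (hneg : (({r1, r2, r3} : Multiset ℝ).filter (fun x => x < 0)).card = neg)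
    (hnd : ({r1, r2, r3} : Multiset ℝ).Nodup) :
    Realizable 3 σ pos neg := by
  have hroots : (X ^ 3 + C a * X ^ 2 + C b * X + C c : ℝ[X]).roots = {r1, r2, r3} := by
    rw [← hfac, roots_mul (mul_ne_zero (X_sub_C_ne_zero r1)
      (mul_ne_zero (X_sub_C_ne_zero r2) (X_sub_C_ne_zero r3))),
      roots_mul (mul_ne_zero (X_sub_C_ne_zero r2) (X_sub_C_ne_zero r3)),
      roots_X_sub_C, roots_X_sub_C, roots_X_sub_C]
    rfl
  refine ⟨X ^ 3 + C a * X ^ 2 + C b * X + C c, by monicity!, by compute_degree!, ?_, ?_, ?_, ?_⟩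
  · intro j hj
    interval_cases j
    · simpa [coeff_X_pow] using h0
    · simpa [coeff_X_pow] using h1
    · simpa [coeff_X_pow] using h2
    · exact Or.inl ⟨h3, by norm_num [coeff_X_pow]⟩
  · rw [hroots]; exact hpos
  · rw [hroots]; exact hneg
  · rw [hroots]; exact hnd

/-- Degree 3 realization with one real root. -/
lemma real_d3q (σ : ℕ → ℤ) (pos neg : ℕ) (a b c r q1 q2 : ℝ)
    (hfac : (X - C r) * (X ^ 2 + C q1 * X + C q2) = X ^ 3 + C a * X ^ 2 + C b * X + C c)
    (hdisc : q1 ^ 2 < 4 * q2)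
    (h3 : σ 3 = 1)
    (h2 : σ 2 = 1 ∧ 0 < a ∨ σ 2 = -1 ∧ a < 0)
    (h1 : σ 1 = 1 ∧ 0 < b ∨ σ 1 = -1 ∧ b < 0)
    (h0 : σ 0 = 1 ∧ 0 < c ∨ σ 0 = -1 ∧ c < 0)
    (hpos : (({r} : Multiset ℝ).filter (fun x => 0 < x)).card = pos)
    (hneg : (({r} : Multiset ℝ).filter (fun x => x < 0)).card = neg) :
    Realizable 3 σ pos neg := by
  have hroots : (X ^ 3 + C a * X ^ 2 + C b * X + C c : ℝ[X]).roots = {r} := by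
    rw [← hfac, roots_mul (mul_ne_zero (X_sub_C_ne_zero r) (quad_ne_zero q1 q2)),
      roots_X_sub_C, quad_roots_nil q1 q2 hdisc, add_zero]
  refine ⟨X ^ 3 + C a * X ^ 2 + C b * X + C c, by monicity!, by compute_degree!, ?_, ?_, ?_, ?_⟩
  · intro j hj
    interval_cases j
    · simpa [coeff_X_pow] using h0
    · simpa [coeff_X_pow] using h1
    · simpa [coeff_X_pow] using h2
    · exact Or.inl ⟨h3, by norm_num [coeff_X_pow]⟩
  · rw [hroots]; exact hpos
  · rw [hroots]; exact hneg
  · rw [hroots]; exact Multiset.nodup_singleton r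

/-- For every degree `1 ≤ d ≤ 3`, every sign pattern `σ` of degree `d` and every
admissible pair `(pos, neg)`, the couple `(σ, (pos, neg))` is realizable. -/
theorem realizable_degree_le_three (d : ℕ) (hd1 : 1 ≤ d) (hd3 : d ≤ 3)
    (σ : ℕ → ℤ) (hσ : ∀ j ≤ d, σ j = 1 ∨ σ j = -1) (hlead : σ d = 1)
    (c p pos neg : ℕ)
    (hc : c = ((Finset.Icc 1 d).filter (fun j => σ j * σ (j - 1) = -1)).card)
    (hp : p = ((Finset.Icc 1 d).filter (fun j => σ j * σ (j - 1) = 1)).card)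
    (hposc : pos ≤ c) (hposE : Even (c - pos))
    (hnegp : neg ≤ p) (hnegE : Even (p - neg)) :
    Realizable d σ pos neg := by
  rw [Nat.even_iff] at hposE hnegE
  interval_cases d
  · -- d = 1
    rcases hσ 0 (by norm_num) with h0 | h0
    · norm_num [show (Finset.Icc 1 1) = {1} from rfl,
        Finset.filter_singleton, h0, hlead] at hc hp
      have hpe : pos = 0 := by omega
      have hne : neg = 1 := by omega
      subst hpe hne
      exact real_d1 σ 0 1 (-1) hlead (Or.inl ⟨h0, by norm_num⟩)
        (by norm_num [Multiset.filter_singleton])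
        (by norm_num [Multiset.filter_singleton])
    · norm_num [show (Finset.Icc 1 1) = {1} from rfl,
        Finset.filter_singleton, h0, hlead] at hc hp
      have hpe : pos = 1 := by omega
      have hne : neg = 0 := by omega
      subst hpe hne
      exact real_d1 σ 1 0 1 hlead (Or.inr ⟨h0, by norm_num⟩)
        (by norm_num [Multiset.filter_singleton])
        (by norm_num [Multiset.filter_singleton])
  · -- d = 2
    rcases hσ 0 (by norm_num) with h0 | h0 <;> rcases hσ 1 (by norm_num) with h1 | h1 <;>
      norm_num [show (Finset.Icc 1 2) = {1, 2} from rfl, Finset.filter_insert,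
        Finset.filter_singleton, h0, h1, hlead] at hc hp
    · -- (+,+,+) : c = 0, p = 2
      have hpe : pos = 0 := by omega
      have hne : neg = 0 ∨ neg = 2 := by omega
      subst hpe
      rcases hne with hne | hne <;> subst hne
      · exact real_d2q σ 1 1 (by norm_num) hlead
          (Or.inl ⟨h1, by norm_num⟩) (Or.inl ⟨h0, by norm_num⟩)
      · exact real_d2 σ 0 2 3 2 (-1) (-2)
          (by simp only [map_neg, map_ofNat, map_one]; ring) hlead
          (Or.inl ⟨h1, by norm_num⟩) (Or.inl ⟨h0, by norm_num⟩)
          (by norm_num [Multiset.filter_cons, Multiset.filter_singleton])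
          (by norm_num [Multiset.filter_cons, Multiset.filter_singleton])
          (by norm_num [Multiset.nodup_cons])
    · -- (+,-,+) : c = 2, p = 0
      have hne : neg = 0 := by omega
      have hpe : pos = 0 ∨ pos = 2 := by omega
      subst hne
      rcases hpe with hpe | hpe <;> subst hpe
      · exact real_d2q σ (-1) 1 (by norm_num) hlead
          (Or.inr ⟨h1, by norm_num⟩) (Or.inl ⟨h0, by norm_num⟩)
      · exact real_d2 σ 2 0 (-3) 2 1 2
          (by simp only [map_neg, map_ofNat, map_one]; ring) hlead
          (Or.inr ⟨h1, by norm_num⟩) (Or.inl ⟨h0, by norm_num⟩)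
          (by norm_num [Multiset.filter_cons, Multiset.filter_singleton])
          (by norm_num [Multiset.filter_cons, Multiset.filter_singleton])
          (by norm_num [Multiset.nodup_cons])
    · -- (+,+,-) : c = 1, p = 1
      have hpe : pos = 1 := by omega
      have hne : neg = 1 := by omega
      subst hpe hne
      exact real_d2 σ 1 1 1 (-2) 1 (-2)
        (by simp only [map_neg, map_ofNat, map_one]; ring) hlead
        (Or.inl ⟨h1, by norm_num⟩) (Or.inr ⟨h0, by norm_num⟩)
        (by norm_num [Multiset.filter_cons, Multiset.filter_singleton])
        (by norm_num [Multiset.filter_cons, Multiset.filter_singleton])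
        (by norm_num [Multiset.nodup_cons])
    · -- (+,-,-) : c = 1, p = 1
      have hpe : pos = 1 := by omega
      have hne : neg = 1 := by omega
      subst hpe hne
      exact real_d2 σ 1 1 (-1) (-2) 2 (-1)
        (by simp only [map_neg, map_ofNat, map_one]; ring) hlead
        (Or.inr ⟨h1, by norm_num⟩) (Or.inr ⟨h0, by norm_num⟩)
        (by norm_num [Multiset.filter_cons, Multiset.filter_singleton])
        (by norm_num [Multiset.filter_cons, Multiset.filter_singleton])
        (by norm_num [Multiset.nodup_cons])
  · -- d = 3
    rcases hσ 0 (by norm_num) with h0 | h0 <;> rcases hσ 1 (by norm_num) with h1 | h1 <;>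
      rcases hσ 2 (by norm_num) with h2 | h2 <;>
      norm_num [show (Finset.Icc 1 3) = {1, 2, 3} from rfl, Finset.filter_insert,
        Finset.filter_singleton, h0, h1, h2, hlead] at hc hp
    · -- (+,+,+,+) : c = 0, p = 3
      have hpe : pos = 0 := by omega
      have hne : neg = 1 ∨ neg = 3 := by omega
      subst hpe
      rcases hne with hne | hne <;> subst hne
      · exact real_d3q σ 0 1 2 2 1 (-1) 1 1
          (by simp only [map_neg, map_ofNat, map_one]; ring) (by norm_num) hlead
          (Or.inl ⟨h2, by norm_num⟩) (Or.inl ⟨h1, by norm_num⟩) (Or.inl ⟨h0, by norm_num⟩)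
          (by norm_num [Multiset.filter_singleton])
          (by norm_num [Multiset.filter_singleton])
      · exact real_d3 σ 0 3 6 11 6 (-1) (-2) (-3)
          (by simp only [map_neg, map_ofNat, map_one]; ring) hlead
          (Or.inl ⟨h2, by norm_num⟩) (Or.inl ⟨h1, by norm_num⟩) (Or.inl ⟨h0, by norm_num⟩)
          (by norm_num [Multiset.filter_cons, Multiset.filter_singleton])
          (by norm_num [Multiset.filter_cons, Multiset.filter_singleton])
          (by norm_num [Multiset.nodup_cons])
    · -- (+,-,+,+) : c = 2, p = 1
      have hne : neg = 1 := by omega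
      have hpe : pos = 0 ∨ pos = 2 := by omega
      subst hne
      rcases hpe with hpe | hpe <;> subst hpe
      · exact real_d3q σ 0 1 (-1) 3 5 (-1) (-2) 5
          (by simp only [map_neg, map_ofNat, map_one]; ring) (by norm_num) hlead
          (Or.inr ⟨h2, by norm_num⟩) (Or.inl ⟨h1, by norm_num⟩) (Or.inl ⟨h0, by norm_num⟩)
          (by norm_num [Multiset.filter_singleton])
          (by norm_num [Multiset.filter_singleton])
      · exact real_d3 σ 2 1 (-4) 1 6 2 3 (-1)
          (by simp only [map_neg, map_ofNat, map_one]; ring) hlead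
          (Or.inr ⟨h2, by norm_num⟩) (Or.inl ⟨h1, by norm_num⟩) (Or.inl ⟨h0, by norm_num⟩)
          (by norm_num [Multiset.filter_cons, Multiset.filter_singleton])
          (by norm_num [Multiset.filter_cons, Multiset.filter_singleton])
          (by norm_num [Multiset.nodup_cons])
    · -- (+,+,-,+) : c = 2, p = 1
      have hne : neg = 1 := by omega
      have hpe : pos = 0 ∨ pos = 2 := by omega
      subst hne
      rcases hpe with hpe | hpe <;> subst hpe
      · exact real_d3q σ 0 1 9 (-8) 20 (-10) (-1) 2
          (by simp only [map_neg, map_ofNat, map_one]; ring) (by norm_num) hlead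
          (Or.inl ⟨h2, by norm_num⟩) (Or.inr ⟨h1, by norm_num⟩) (Or.inl ⟨h0, by norm_num⟩)
          (by norm_num [Multiset.filter_singleton])
          (by norm_num [Multiset.filter_singleton])
      · exact real_d3 σ 2 1 1 (-10) 8 1 2 (-4)
          (by simp only [map_neg, map_ofNat, map_one]; ring) hlead
          (Or.inl ⟨h2, by norm_num⟩) (Or.inr ⟨h1, by norm_num⟩) (Or.inl ⟨h0, by norm_num⟩)
          (by norm_num [Multiset.filter_cons, Multiset.filter_singleton])
          (by norm_num [Multiset.filter_cons, Multiset.filter_singleton])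
          (by norm_num [Multiset.nodup_cons])
    · -- (+,-,-,+) : c = 2, p = 1
      have hne : neg = 1 := by omega
      have hpe : pos = 0 ∨ pos = 2 := by omega
      subst hne
      rcases hpe with hpe | hpe <;> subst hpe
      · exact real_d3q σ 0 1 (-1) (-7) 15 (-3) (-4) 5
          (by simp only [map_neg, map_ofNat, map_one]; ring) (by norm_num) hlead
          (Or.inr ⟨h2, by norm_num⟩) (Or.inr ⟨h1, by norm_num⟩) (Or.inl ⟨h0, by norm_num⟩)
          (by norm_num [Multiset.filter_singleton])
          (by norm_num [Multiset.filter_singleton])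
      · exact real_d3 σ 2 1 (-3) (-6) 8 1 4 (-2)
          (by simp only [map_neg, map_ofNat, map_one]; ring) hlead
          (Or.inr ⟨h2, by norm_num⟩) (Or.inr ⟨h1, by norm_num⟩) (Or.inl ⟨h0, by norm_num⟩)
          (by norm_num [Multiset.filter_cons, Multiset.filter_singleton])
          (by norm_num [Multiset.filter_cons, Multiset.filter_singleton])
          (by norm_num [Multiset.nodup_cons])
    · -- (+,+,+,-) : c = 1, p = 2
      have hpe : pos = 1 := by omega
      have hne : neg = 0 ∨ neg = 2 := by omega
      subst hpe
      rcases hne with hne | hne <;> subst hne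
      · exact real_d3q σ 1 0 1 1 (-3) 1 2 3
          (by simp only [map_neg, map_ofNat, map_one]; ring) (by norm_num) hlead
          (Or.inl ⟨h2, by norm_num⟩) (Or.inl ⟨h1, by norm_num⟩) (Or.inr ⟨h0, by norm_num⟩)
          (by norm_num [Multiset.filter_singleton])
          (by norm_num [Multiset.filter_singleton])
      · exact real_d3 σ 1 2 4 1 (-6) 1 (-2) (-3)
          (by simp only [map_neg, map_ofNat, map_one]; ring) hlead
          (Or.inl ⟨h2, by norm_num⟩) (Or.inl ⟨h1, by norm_num⟩) (Or.inr ⟨h0, by norm_num⟩)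
          (by norm_num [Multiset.filter_cons, Multiset.filter_singleton])
          (by norm_num [Multiset.filter_cons, Multiset.filter_singleton])
          (by norm_num [Multiset.nodup_cons])
    · -- (+,-,+,-) : c = 3, p = 0
      have hne : neg = 0 := by omega
      have hpe : pos = 1 ∨ pos = 3 := by omega
      subst hne
      rcases hpe with hpe | hpe <;> subst hpe
      · exact real_d3q σ 1 0 (-2) 2 (-1) 1 (-1) 1
          (by simp only [map_neg, map_ofNat, map_one]; ring) (by norm_num) hlead
          (Or.inr ⟨h2, by norm_num⟩) (Or.inl ⟨h1, by norm_num⟩) (Or.inr ⟨h0, by norm_num⟩)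
          (by norm_num [Multiset.filter_singleton])
          (by norm_num [Multiset.filter_singleton])
      · exact real_d3 σ 3 0 (-6) 11 (-6) 1 2 3
          (by simp only [map_neg, map_ofNat, map_one]; ring) hlead
          (Or.inr ⟨h2, by norm_num⟩) (Or.inl ⟨h1, by norm_num⟩) (Or.inr ⟨h0, by norm_num⟩)
          (by norm_num [Multiset.filter_cons, Multiset.filter_singleton])
          (by norm_num [Multiset.filter_cons, Multiset.filter_singleton])
          (by norm_num [Multiset.nodup_cons])
    · -- (+,+,-,-) : c = 1, p = 2
      have hpe : pos = 1 := by omega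
      have hne : neg = 0 ∨ neg = 2 := by omega
      subst hpe
      rcases hne with hne | hne <;> subst hne
      · exact real_d3q σ 1 0 1 (-2) (-8) 2 3 4
          (by simp only [map_neg, map_ofNat, map_one]; ring) (by norm_num) hlead
          (Or.inl ⟨h2, by norm_num⟩) (Or.inr ⟨h1, by norm_num⟩) (Or.inr ⟨h0, by norm_num⟩)
          (by norm_num [Multiset.filter_singleton])
          (by norm_num [Multiset.filter_singleton])
      · exact real_d3 σ 1 2 2 (-11) (-12) 3 (-1) (-4)
          (by simp only [map_neg, map_ofNat, map_one]; ring) hlead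
          (Or.inl ⟨h2, by norm_num⟩) (Or.inr ⟨h1, by norm_num⟩) (Or.inr ⟨h0, by norm_num⟩)
          (by norm_num [Multiset.filter_cons, Multiset.filter_singleton])
          (by norm_num [Multiset.filter_cons, Multiset.filter_singleton])
          (by norm_num [Multiset.nodup_cons])
    · -- (+,-,-,-) : c = 1, p = 2
      have hpe : pos = 1 := by omega
      have hne : neg = 0 ∨ neg = 2 := by omega
      subst hpe
      rcases hne with hne | hne <;> subst hne
      · exact real_d3q σ 1 0 (-2) (-1) (-6) 3 1 2
          (by simp only [map_neg, map_ofNat, map_one]; ring) (by norm_num) hlead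
          (Or.inr ⟨h2, by norm_num⟩) (Or.inr ⟨h1, by norm_num⟩) (Or.inr ⟨h0, by norm_num⟩)
          (by norm_num [Multiset.filter_singleton])
          (by norm_num [Multiset.filter_singleton])
      · exact real_d3 σ 1 2 (-1) (-10) (-8) 4 (-1) (-2)
          (by simp only [map_neg, map_ofNat, map_one]; ring) hlead
          (Or.inr ⟨h2, by norm_num⟩) (Or.inr ⟨h1, by norm_num⟩) (Or.inr ⟨h0, by norm_num⟩)
          (by norm_num [Multiset.filter_cons, Multiset.filter_singleton])
          (by norm_num [Multiset.filter_cons, Multiset.filter_singleton])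
          (by norm_num [Multiset.nodup_cons])
end

section
/- Consider the set of couples (σ, (pos, neg)) where σ = (σ_5, …, σ_0) is a sign pattern of degree 5 and (pos, neg) is admissible for σ, together with the ℤ/2 × ℤ/2-action generated by the commuting involutions g_1: (σ, (pos, neg)) ↦ (σ', (neg, pos)) with σ'_j = (−1)^{j+1} σ_j, and g_2: (σ, (pos, neg)) ↦ (σ'', (pos, neg)) with σ''_j = σ_0 · σ_{5−j}. This action has exactly 22 orbits of cardinality 4 and exactly 14 orbits of cardinality 2. -/
/-- A couple: a candidate sign pattern (indexed by the degree of the coefficient,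
`σ j` being the sign of the coefficient of `x^j`) together with a pair `(pos, neg)`. -/
abbrev Couple : Type := (Fin 6 → ℤ) × ℕ × ℕ

/-- `σ` is a sign pattern of degree 5: all entries are `±1` and the leading one is `+1`. -/
def IsSignPattern (σ : Fin 6 → ℤ) : Prop :=
  (∀ i, σ i = 1 ∨ σ i = -1) ∧ σ 5 = 1

/-- The number of sign changes of `σ`. -/
def changes (σ : Fin 6 → ℤ) : ℕ :=
  (Finset.univ.filter (fun i : Fin 5 => σ i.succ * σ i.castSucc = -1)).card

/-- The number of sign preservations of `σ`. -/
def preservations (σ : Fin 6 → ℤ) : ℕ :=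
  (Finset.univ.filter (fun i : Fin 5 => σ i.succ * σ i.castSucc = 1)).card

/-- The couple `(σ, (pos, neg))` consists of a sign pattern of degree 5 together with
an admissible pair for it. -/
def IsAdmissibleCouple (x : Couple) : Prop :=
  IsSignPattern x.1 ∧
  x.2.1 ≤ changes x.1 ∧ Even (changes x.1 - x.2.1) ∧
  x.2.2 ≤ preservations x.1 ∧ Even (preservations x.1 - x.2.2)

/-- The first generator: `(σ, (pos, neg)) ↦ (σ', (neg, pos))` with
`σ'_j = (-1)^(j+1) σ_j` (corresponding to `P(x) ↦ -P(-x)`). -/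
def g₁ (x : Couple) : Couple :=
  (fun j => (-1 : ℤ) ^ ((j : ℕ) + 1) * x.1 j, x.2.2, x.2.1)

/-- The second generator: `(σ, (pos, neg)) ↦ (σ'', (pos, neg))` with
`σ''_j = σ_0 · σ_(5-j)` (corresponding to the reverted polynomial). -/
def g₂ (x : Couple) : Couple :=
  (fun j => x.1 0 * x.1 j.rev, x.2.1, x.2.2)

/-- The orbit of a couple under the `ℤ/2 × ℤ/2`-action generated by `g₁` and `g₂`. -/
def orbitOf (x : Couple) : Set Couple :=
  {x, g₁ x, g₂ x, g₁ (g₂ x)}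


section Aux

set_option maxRecDepth 10000
set_option maxHeartbeats 4000000

instance : DecidablePred IsAdmissibleCouple := fun x => by
  unfold IsAdmissibleCouple IsSignPattern; infer_instance

/-- The orbit of a couple, as a `Finset`. -/
def orbitFinset (x : Couple) : Finset Couple := {x, g₁ x, g₂ x, g₁ (g₂ x)}

lemma coe_orbitFinset (x : Couple) : (↑(orbitFinset x) : Set Couple) = orbitOf x := by
  simp [orbitFinset, orbitOf]

/-- A finite superset of the admissible couples. -/
def E : Finset Couple :=
  (Fintype.piFinset (fun _ : Fin 6 => ({1, -1} : Finset ℤ))) ×ˢ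
    (Finset.range 6 ×ˢ Finset.range 6)

/-- The orbits (as `Finset`s) of admissible couples having cardinality `n`. -/
def Orbs (n : ℕ) : Finset (Finset Couple) :=
  ((E.filter IsAdmissibleCouple).image orbitFinset).filter (fun s => s.card = n)

lemma changes_le (σ : Fin 6 → ℤ) : changes σ ≤ 5 := by
  have := Finset.card_filter_le (Finset.univ : Finset (Fin 5))
    (fun i : Fin 5 => σ i.succ * σ i.castSucc = -1)
  simpa [changes] using this

lemma preservations_le (σ : Fin 6 → ℤ) : preservations σ ≤ 5 := by
  have := Finset.card_filter_le (Finset.univ : Finset (Fin 5))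
    (fun i : Fin 5 => σ i.succ * σ i.castSucc = 1)
  simpa [preservations] using this

lemma mem_E_of_adm {x : Couple} (hx : IsAdmissibleCouple x) : x ∈ E := by
  obtain ⟨⟨h1, _⟩, hp, _, hn, _⟩ := hx
  simp only [E, Finset.mem_product, Fintype.mem_piFinset, Finset.mem_range]
  refine ⟨fun i => ?_, ?_, ?_⟩
  · rcases h1 i with h | h <;> simp [h]
  · exact lt_of_le_of_lt (hp.trans (changes_le _)) (by norm_num)
  · exact lt_of_le_of_lt (hn.trans (preservations_le _)) (by norm_num)

lemma setEq (n : ℕ) :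
    {o : Set Couple | (∃ x, IsAdmissibleCouple x ∧ o = orbitOf x) ∧ o.ncard = n}
      = (fun s : Finset Couple => (↑s : Set Couple)) '' ↑(Orbs n) := by
  ext o
  constructor
  · rintro ⟨⟨x, hx, rfl⟩, hcard⟩
    refine ⟨orbitFinset x, ?_, coe_orbitFinset x⟩
    simp only [Orbs, Finset.coe_filter, Set.mem_setOf_eq, Finset.mem_image]
    refine ⟨⟨x, Finset.mem_filter.mpr ⟨mem_E_of_adm hx, hx⟩, rfl⟩, ?_⟩
    rw [← hcard, ← coe_orbitFinset, Set.ncard_coe_finset]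
  · rintro ⟨s, hs, rfl⟩
    simp only [Orbs, Finset.coe_filter, Set.mem_setOf_eq, Finset.mem_image] at hs
    obtain ⟨⟨x, hxmem, rfl⟩, hcard⟩ := hs
    have hx := (Finset.mem_filter.mp hxmem).2
    refine ⟨⟨x, hx, (coe_orbitFinset x)⟩, ?_⟩
    rw [Set.ncard_coe_finset]
    exact hcard

lemma count (n : ℕ) :
    {o : Set Couple | (∃ x, IsAdmissibleCouple x ∧ o = orbitOf x) ∧ o.ncard = n}.ncard
      = (Orbs n).card := by
  rw [setEq, Set.ncard_image_of_injective _ Finset.coe_injective, Set.ncard_coe_finset]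

end Aux

set_option maxRecDepth 10000
set_option maxHeartbeats 4000000

/-- For `d = 5`, the `ℤ/2 × ℤ/2`-action on couples (sign pattern, admissible pair)
has exactly 22 orbits of cardinality 4 and exactly 14 orbits of cardinality 2. -/
theorem orbit_count_degree_five :
    {o : Set Couple | (∃ x, IsAdmissibleCouple x ∧ o = orbitOf x) ∧ o.ncard = 4}.ncard = 22 ∧
    {o : Set Couple | (∃ x, IsAdmissibleCouple x ∧ o = orbitOf x) ∧ o.ncard = 2}.ncard = 14 := by
  rw [count, count]
  constructor <;> decide
end

section
/- Let a, b ∈ ℝ with b ≠ 0. Then there exists ε > 0 such that for all c, d ∈ ℝ with |c| < ε and |d| < ε, if the polynomial x^5 + x^4 + a x^3 + b x^2 + c x + d has a real root x_0 with |x_0| < ε of multiplicity at least 2, then b·d ≥ 0 (i.e. d ≥ 0 when b > 0 and d ≤ 0 when b < 0). -/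
open Polynomial

/-- Near a point of the parameter space with `c = d = 0` and `b ≠ 0`, the discriminant
set of the family `x^5 + x^4 + a x^3 + b x^2 + c x + d` lies locally in the half-space
`b·d ≥ 0`: if the polynomial has a real root of multiplicity at least 2 near `0`, with
`c`, `d` small, then `b·d ≥ 0`. -/
theorem discriminant_local_tangency (a b : ℝ) (hb : b ≠ 0) :
    ∃ ε > 0, ∀ c d : ℝ, |c| < ε → |d| < ε → ∀ x₀ : ℝ, |x₀| < ε →
      ((X - C x₀) ^ 2 ∣
        (X ^ 5 + X ^ 4 + C a * X ^ 3 + C b * X ^ 2 + C c * X + C d : Polynomial ℝ)) →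
      0 ≤ b * d := by
  set M : ℝ := |b| * (7 + 2 * |a|) with hM
  have hMpos : 0 ≤ M := by positivity
  have hb2 : (0:ℝ) < b ^ 2 := by positivity
  refine ⟨min 1 (b ^ 2 / (M + 1)), ?_, ?_⟩
  · apply lt_min one_pos
    positivity
  intro c d _ _ x₀ hx hdvd
  have hx1 : |x₀| ≤ 1 := le_of_lt (lt_of_lt_of_le hx (min_le_left _ _))
  have hx2 : |x₀| < b ^ 2 / (M + 1) := lt_of_lt_of_le hx (min_le_right _ _)
  have hxM : |x₀| * (M + 1) < b ^ 2 := by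
    rw [← lt_div_iff₀ (by linarith)]
    exact hx2
  obtain ⟨q, hq⟩ := hdvd
  have e1 : x₀ ^ 5 + x₀ ^ 4 + a * x₀ ^ 3 + b * x₀ ^ 2 + c * x₀ + d = 0 := by
    have := congrArg (eval x₀) hq
    simpa using this
  have e2 : 5 * x₀ ^ 4 + 4 * x₀ ^ 3 + 3 * a * x₀ ^ 2 + 2 * b * x₀ + c = 0 := by
    have := congrArg (eval x₀) (congrArg derivative hq)
    simp [derivative_mul, derivative_pow] at this
    linarith [this]
  have hd : d = 4 * x₀ ^ 5 + 3 * x₀ ^ 4 + 2 * a * x₀ ^ 3 + b * x₀ ^ 2 := by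
    linear_combination e1 - x₀ * e2
  have habs : |x₀| ^ 2 ≤ |x₀| := by nlinarith [abs_nonneg x₀]
  have habs3 : |x₀| ^ 3 ≤ |x₀| := by nlinarith [abs_nonneg x₀]
  have key : |4 * b * x₀ ^ 3 + 3 * b * x₀ ^ 2 + 2 * (a * b) * x₀| ≤ |x₀| * M := by
    calc |4 * b * x₀ ^ 3 + 3 * b * x₀ ^ 2 + 2 * (a * b) * x₀|
        ≤ |4 * b * x₀ ^ 3 + 3 * b * x₀ ^ 2| + |2 * (a * b) * x₀| := abs_add_le _ _
      _ ≤ |4 * b * x₀ ^ 3| + |3 * b * x₀ ^ 2| + |2 * (a * b) * x₀| := by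
          linarith [abs_add_le (4 * b * x₀ ^ 3) (3 * b * x₀ ^ 2)]
      _ = 4 * |b| * |x₀| ^ 3 + 3 * |b| * |x₀| ^ 2 + 2 * (|a| * |b|) * |x₀| := by
          simp [abs_mul, abs_pow]
      _ ≤ 4 * |b| * |x₀| + 3 * |b| * |x₀| + 2 * (|a| * |b|) * |x₀| := by
          nlinarith [abs_nonneg b, abs_nonneg a]
      _ = |x₀| * M := by rw [hM]; ring
  have hsum : 0 ≤ b ^ 2 + (4 * b * x₀ ^ 3 + 3 * b * x₀ ^ 2 + 2 * (a * b) * x₀) := by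
    have h1 : -(|x₀| * M) ≤ 4 * b * x₀ ^ 3 + 3 * b * x₀ ^ 2 + 2 * (a * b) * x₀ :=
      neg_abs_le _ |>.trans' (by linarith [neg_le_neg key])
    nlinarith [abs_nonneg x₀]
  have : b * d = x₀ ^ 2 * (b ^ 2 + (4 * b * x₀ ^ 3 + 3 * b * x₀ ^ 2 + 2 * (a * b) * x₀)) := by
    rw [hd]; ring
  rw [this]
  positivity
end

section
/- Fix m, n ≥ 1 and identify ℝ^m (resp. ℝ^n) with the space of monic real polynomials of degree m (resp. n) via coefficients: u = (u_0, …, u_{m−1}) ↦ x^m + Σ_{i<m} u_i x^i. Let μ : ℝ^m × ℝ^n → ℝ^{m+n} be the map sending (u, v) to the vector of non-leading coefficients of the product of the corresponding monic polynomials. If (u_0, v_0) corresponds to a pair of monic polynomials with no common complex root, then μ is a local diffeomorphism at (u_0, v_0): there exist open neighbourhoods U of (u_0, v_0) and V of μ(u_0, v_0) such that μ restricts to a diffeomorphism from U onto V. -/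
open Polynomial

/-- The monic real polynomial of degree `k` whose non-leading coefficients are given
by `u : Fin k → ℝ`. -/
noncomputable def toMonicPoly (k : ℕ) (u : Fin k → ℝ) : Polynomial ℝ :=
  X ^ k + ∑ i : Fin k, C (u i) * X ^ (i : ℕ)

/-- The multiplication map in coordinates: it sends the non-leading coefficients of two
monic polynomials of degrees `m` and `n` to the non-leading coefficients of their
product (a monic polynomial of degree `m + n`). -/
noncomputable def mulMap (m n : ℕ) (uv : (Fin m → ℝ) × (Fin n → ℝ)) :
    Fin (m + n) → ℝ :=
  fun j => (toMonicPoly m uv.1 * toMonicPoly n uv.2).coeff (j : ℕ)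

/-! ### Auxiliary definitions and lemmas -/

/-- The linear map sending `u : Fin k → ℝ` to the polynomial `∑ i, u i * X ^ i`. -/
noncomputable def mmlp (k : ℕ) : (Fin k → ℝ) →ₗ[ℝ] Polynomial ℝ where
  toFun u := ∑ i : Fin k, C (u i) * X ^ (i : ℕ)
  map_add' u v := by simp [C_add, add_mul, Finset.sum_add_distrib]
  map_smul' c u := by
    simp only [Pi.smul_apply, smul_eq_mul, C_mul, Finset.smul_sum, RingHom.id_apply]
    refine Finset.sum_congr rfl fun i _ => ?_
    rw [smul_eq_C_mul, mul_assoc]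

lemma coeff_mmlp (k : ℕ) (u : Fin k → ℝ) (i : ℕ) :
    (mmlp k u).coeff i = if h : i < k then u ⟨i, h⟩ else 0 := by
  simp only [mmlp, LinearMap.coe_mk, AddHom.coe_mk, finset_sum_coeff, coeff_C_mul, coeff_X_pow]
  rcases lt_or_ge i k with h | h
  · rw [dif_pos h, Finset.sum_eq_single (⟨i, h⟩ : Fin k)]
    · simp
    · intro j _ hj
      rw [if_neg, mul_zero]
      exact fun hji => hj (Fin.ext hji.symm)
    · simp
  · rw [dif_neg (not_lt.2 h)]
    refine Finset.sum_eq_zero fun j _ => ?_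
    rw [if_neg, mul_zero]
    exact fun hji => absurd (hji ▸ j.isLt) (not_lt.2 h)

lemma coeff_mmlp' (k : ℕ) (u : Fin k → ℝ) (i : Fin k) : (mmlp k u).coeff (i : ℕ) = u i := by
  rw [coeff_mmlp, dif_pos i.isLt]

lemma degree_mmlp_lt (k : ℕ) (u : Fin k → ℝ) : (mmlp k u).degree < ((k : ℕ) : WithBot ℕ) := by
  have h1 : ∀ i : Fin k, (C (u i) * X ^ (i : ℕ)).degree < ((k : ℕ) : WithBot ℕ) :=
    fun i => lt_of_le_of_lt (degree_C_mul_X_pow_le _ _)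
      (by exact_mod_cast i.isLt)
  have h2 : mmlp k u = ∑ i : Fin k, C (u i) * X ^ (i : ℕ) := rfl
  rw [h2]
  refine lt_of_le_of_lt (degree_sum_le _ _) ?_
  exact (Finset.sup_lt_iff (WithBot.bot_lt_coe (k : ℕ))).2 fun i _ => h1 i

lemma toMonicPoly_eq (k : ℕ) (u : Fin k → ℝ) : toMonicPoly k u = X ^ k + mmlp k u := rfl

lemma monic_toMonicPoly (k : ℕ) (u : Fin k → ℝ) : (toMonicPoly k u).Monic := by
  rw [toMonicPoly_eq]; exact monic_X_pow_add (degree_mmlp_lt k u)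

lemma degree_toMonicPoly (k : ℕ) (u : Fin k → ℝ) : (toMonicPoly k u).degree = k := by
  rw [toMonicPoly_eq, degree_add_eq_left_of_degree_lt, degree_X_pow]
  rw [degree_X_pow]; exact degree_mmlp_lt k u

lemma toMonicPoly_ne_zero (k : ℕ) (u : Fin k → ℝ) : toMonicPoly k u ≠ 0 :=
  (monic_toMonicPoly k u).ne_zero

/-- Two real polynomials with no common complex root are coprime. -/
lemma isCoprime_of_no_common_root {p q : Polynomial ℝ} (hp : p ≠ 0)
    (hcop : ∀ z : ℂ, ¬ (aeval z p = 0 ∧ aeval z q = 0)) : IsCoprime p q := by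
  classical
  rw [← EuclideanDomain.gcd_isUnit_iff]
  by_contra hu
  set d := EuclideanDomain.gcd p q with hd
  have hd0 : d ≠ 0 := fun h => hp (EuclideanDomain.gcd_eq_zero_iff.1 h).1
  have hdegne : d.degree ≠ 0 := fun h => hu (isUnit_iff_degree_eq_zero.2 h)
  have hdeg : 0 < (d.map (algebraMap ℝ ℂ)).degree := by
    rw [degree_map]
    exact lt_of_le_of_ne (zero_le_degree_iff.2 hd0) (Ne.symm hdegne)
  obtain ⟨z, hz⟩ := Complex.exists_root hdeg
  refine hcop z ⟨?_, ?_⟩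
  · obtain ⟨c, hc⟩ := EuclideanDomain.gcd_dvd_left p q
    rw [hc, map_mul, show (aeval z) d = 0 from ?_, zero_mul]
    rw [aeval_def, ← eval_map]; exact hz
  · obtain ⟨c, hc⟩ := EuclideanDomain.gcd_dvd_right p q
    rw [hc, map_mul, show (aeval z) d = 0 from ?_, zero_mul]
    rw [aeval_def, ← eval_map]; exact hz

/-- The bilinear part of the multiplication map. -/
noncomputable def mmB (m n : ℕ) :
    (Fin m → ℝ) →ₗ[ℝ] (Fin n → ℝ) →ₗ[ℝ] (Fin (m + n) → ℝ) where
  toFun a :=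
    { toFun := fun b => fun j => (mmlp m a * mmlp n b).coeff (j : ℕ)
      map_add' := fun b₁ b₂ => by
        funext j
        simp [mul_add]
      map_smul' := fun c b => by
        funext j
        simp [mul_smul_comm] }
  map_add' a₁ a₂ := by
    ext b j
    simp [add_mul]
  map_smul' c a := by
    ext b j
    simp [smul_mul_assoc]

/-- The linear part of the multiplication map. -/
noncomputable def mmA (m n : ℕ) :
    ((Fin m → ℝ) × (Fin n → ℝ)) →ₗ[ℝ] (Fin (m + n) → ℝ) where
  toFun x := fun j => (X ^ m * mmlp n x.2 + X ^ n * mmlp m x.1).coeff (j : ℕ)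
  map_add' x y := by
    funext j
    simp [mul_add, add_add_add_comm]
  map_smul' c x := by
    funext j
    simp [mul_smul_comm, mul_add]

/-- The derivative of the multiplication map at the point `(u₀, v₀)`, as a linear map. -/
noncomputable def mmT (m n : ℕ) (u₀ : Fin m → ℝ) (v₀ : Fin n → ℝ) :
    ((Fin m → ℝ) × (Fin n → ℝ)) →ₗ[ℝ] (Fin (m + n) → ℝ) where
  toFun x := fun j =>
    (mmlp m x.1 * (X ^ n + mmlp n v₀) + (X ^ m + mmlp m u₀) * mmlp n x.2).coeff (j : ℕ)
  map_add' x y := by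
    funext j
    simp only [Prod.fst_add, Prod.snd_add, map_add, add_mul, mul_add, coeff_add, Pi.add_apply]
    ring
  map_smul' c x := by
    funext j
    simp only [Prod.smul_fst, Prod.smul_snd, map_smul, smul_mul_assoc, mul_smul_comm,
      coeff_smul, smul_eq_mul, RingHom.id_apply, Pi.smul_apply, coeff_add]
    ring

lemma mmB_apply (m n : ℕ) (a : Fin m → ℝ) (b : Fin n → ℝ) :
    mmB m n a b = fun j : Fin (m + n) => (mmlp m a * mmlp n b).coeff (j : ℕ) := rfl

lemma mmA_apply (m n : ℕ) (x : (Fin m → ℝ) × (Fin n → ℝ)) :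
    mmA m n x = fun j : Fin (m + n) =>
      (X ^ m * mmlp n x.2 + X ^ n * mmlp m x.1).coeff (j : ℕ) := rfl

lemma mmT_apply (m n : ℕ) (u₀ : Fin m → ℝ) (v₀ : Fin n → ℝ) (x : (Fin m → ℝ) × (Fin n → ℝ)) :
    mmT m n u₀ v₀ x = fun j : Fin (m + n) =>
      (mmlp m x.1 * (X ^ n + mmlp n v₀) + (X ^ m + mmlp m u₀) * mmlp n x.2).coeff (j : ℕ) := rfl

/-- Injectivity of the derivative, from coprimality. -/
lemma mmT_injective (m n : ℕ) (u₀ : Fin m → ℝ) (v₀ : Fin n → ℝ)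
    (hcop : IsCoprime (toMonicPoly m u₀) (toMonicPoly n v₀)) :
    Function.Injective (mmT m n u₀ v₀) := by
  rw [← LinearMap.ker_eq_bot, LinearMap.ker_eq_bot']
  intro x hx
  set P := toMonicPoly m u₀ with hP
  set Q := toMonicPoly n v₀ with hQ
  set R := mmlp m x.1 * Q + P * mmlp n x.2 with hR
  have hxj : ∀ j : Fin (m + n), R.coeff (j : ℕ) = 0 := fun j => congrFun hx j
  have hd1 : (mmlp m x.1 * Q).degree < ((m + n : ℕ) : WithBot ℕ) := by
    refine lt_of_le_of_lt (degree_mul_le _ _) ?_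
    rw [hQ, degree_toMonicPoly, Nat.cast_add]
    exact WithBot.add_lt_add_right (by exact_mod_cast (WithBot.coe_ne_bot))
      (degree_mmlp_lt m x.1)
  have hd2 : (P * mmlp n x.2).degree < ((m + n : ℕ) : WithBot ℕ) := by
    refine lt_of_le_of_lt (degree_mul_le _ _) ?_
    rw [hP, degree_toMonicPoly, Nat.cast_add]
    exact WithBot.add_lt_add_left (by exact_mod_cast (WithBot.coe_ne_bot))
      (degree_mmlp_lt n x.2)
  have hRdeg : R.degree < ((m + n : ℕ) : WithBot ℕ) :=
    lt_of_le_of_lt (degree_add_le _ _) (max_lt hd1 hd2)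
  have hR0 : R = 0 := by
    apply Polynomial.ext
    intro i
    rcases lt_or_ge i (m + n) with h | h
    · simpa using hxj ⟨i, h⟩
    · rw [coeff_zero]
      exact coeff_eq_zero_of_degree_lt (lt_of_lt_of_le hRdeg (by exact_mod_cast h))
  have h1 : mmlp m x.1 * Q = P * (-mmlp n x.2) := by
    have h2 := eq_neg_of_add_eq_zero_left (hR ▸ hR0)
    rw [h2]; ring
  have hdvd : P ∣ mmlp m x.1 := hcop.dvd_of_dvd_mul_right ⟨-mmlp n x.2, h1⟩
  have ha : mmlp m x.1 = 0 := by
    by_contra hne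
    have hle := degree_le_of_dvd hdvd hne
    rw [hP, degree_toMonicPoly] at hle
    exact absurd (lt_of_le_of_lt hle (degree_mmlp_lt m x.1)) (lt_irrefl _)
  have hR0' : mmlp m x.1 * Q + P * mmlp n x.2 = 0 := hR ▸ hR0
  have hb : mmlp n x.2 = 0 := by
    rw [ha, zero_mul, zero_add] at hR0'
    rcases mul_eq_zero.1 hR0' with h | h
    · exact absurd h (toMonicPoly_ne_zero m u₀)
    · exact h
  have hx1 : x.1 = 0 := funext fun i => by
    rw [show x.1 i = (mmlp m x.1).coeff (i : ℕ) from (coeff_mmlp' m x.1 i).symm, ha, coeff_zero]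
    rfl
  have hx2 : x.2 = 0 := funext fun i => by
    rw [show x.2 i = (mmlp n x.2).coeff (i : ℕ) from (coeff_mmlp' n x.2 i).symm, hb, coeff_zero]
    rfl
  exact Prod.ext hx1 hx2

/-- The continuous linear part. -/
noncomputable def mmAC (m n : ℕ) : ((Fin m → ℝ) × (Fin n → ℝ)) →L[ℝ] (Fin (m + n) → ℝ) :=
  LinearMap.toContinuousLinearMap (mmA m n)

/-- The continuous bilinear part. -/
noncomputable def mmBC (m n : ℕ) :
    (Fin m → ℝ) →L[ℝ] (Fin n → ℝ) →L[ℝ] (Fin (m + n) → ℝ) :=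
  LinearMap.toContinuousLinearMap
    ((LinearMap.toContinuousLinearMap :
        ((Fin n → ℝ) →ₗ[ℝ] (Fin (m + n) → ℝ)) ≃ₗ[ℝ]
          ((Fin n → ℝ) →L[ℝ] (Fin (m + n) → ℝ))).toLinearMap
      ∘ₗ mmB m n)

lemma mmBC_apply (m n : ℕ) (a : Fin m → ℝ) (b : Fin n → ℝ) : mmBC m n a b = mmB m n a b := by
  simp [mmBC]

lemma mmAC_apply (m n : ℕ) (x) : mmAC m n x = mmA m n x := by simp [mmAC]

attribute [irreducible] mmlp mmA mmB mmT mmAC mmBC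

/-- The multiplication map in coordinates is an affine-plus-bilinear expression. -/
lemma mulMap_key_eq (m n : ℕ) (x : (Fin m → ℝ) × (Fin n → ℝ)) :
    mulMap m n x = mmAC m n x + mmBC m n x.1 x.2 := by
  rw [mmAC_apply, mmBC_apply, mmA_apply, mmB_apply]
  funext j
  have hexp : toMonicPoly m x.1 * toMonicPoly n x.2 =
      X ^ (m + n) + ((X ^ m * mmlp n x.2 + X ^ n * mmlp m x.1) + mmlp m x.1 * mmlp n x.2) := by
    rw [toMonicPoly_eq, toMonicPoly_eq, pow_add]; ring
  rw [mulMap]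
  simp only [hexp, coeff_add, Pi.add_apply]
  rw [coeff_X_pow, if_neg (Nat.ne_of_gt j.isLt).symm]
  ring

lemma contDiff_mulMap (m n : ℕ) : ContDiff ℝ (⊤ : ℕ∞) (mulMap m n) := by
  have h : mulMap m n = fun x => mmAC m n x + mmBC m n x.1 x.2 := funext (mulMap_key_eq m n)
  rw [h]
  exact (mmAC m n).contDiff.add ((mmBC m n).isBoundedBilinearMap.contDiff)

lemma hasFDerivAt_mulMap (m n : ℕ) (x₀ : (Fin m → ℝ) × (Fin n → ℝ)) :
    HasFDerivAt (mulMap m n)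
      (mmAC m n +
        ((mmBC m n).precompR ((Fin m → ℝ) × (Fin n → ℝ)) x₀.1
            (ContinuousLinearMap.snd ℝ (Fin m → ℝ) (Fin n → ℝ)) +
          (mmBC m n).precompL ((Fin m → ℝ) × (Fin n → ℝ))
            (ContinuousLinearMap.fst ℝ (Fin m → ℝ) (Fin n → ℝ)) x₀.2)) x₀ := by
  have h : mulMap m n = fun x => mmAC m n x + mmBC m n x.1 x.2 := funext (mulMap_key_eq m n)
  rw [h]
  exact (mmAC m n).hasFDerivAt.add
    ((mmBC m n).hasFDerivAt_of_bilinear (hasFDerivAt_fst) (hasFDerivAt_snd))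

lemma mm_deriv_eq (m n : ℕ) (u₀ : Fin m → ℝ) (v₀ : Fin n → ℝ) :
    (mmAC m n +
        ((mmBC m n).precompR ((Fin m → ℝ) × (Fin n → ℝ)) u₀
            (ContinuousLinearMap.snd ℝ (Fin m → ℝ) (Fin n → ℝ)) +
          (mmBC m n).precompL ((Fin m → ℝ) × (Fin n → ℝ))
            (ContinuousLinearMap.fst ℝ (Fin m → ℝ) (Fin n → ℝ)) v₀)) =
      LinearMap.toContinuousLinearMap (mmT m n u₀ v₀) := by
  refine ContinuousLinearMap.ext fun x => ?_
  funext j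
  simp only [ContinuousLinearMap.add_apply, ContinuousLinearMap.precompR_apply,
    ContinuousLinearMap.precompL_apply, ContinuousLinearMap.coe_snd', ContinuousLinearMap.coe_fst',
    LinearMap.coe_toContinuousLinearMap', mmAC_apply, mmBC_apply, mmA_apply, mmB_apply,
    mmT_apply, Pi.add_apply, ContinuousLinearMap.compL_apply,
    ContinuousLinearMap.coe_comp', Function.comp_apply]
  rw [← coeff_add, ← coeff_add]
  congr 1
  ring

lemma hasFDerivAt_mulMap_T (m n : ℕ) (x₀ : (Fin m → ℝ) × (Fin n → ℝ)) :
    HasFDerivAt (mulMap m n) (LinearMap.toContinuousLinearMap (mmT m n x₀.1 x₀.2)) x₀ := by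
  have h := hasFDerivAt_mulMap m n x₀
  rwa [mm_deriv_eq m n x₀.1 x₀.2] at h

/-- Méguerditchian's Lemma about the product (for two factors): if two monic real
polynomials have no common complex root, then the multiplication map is a local
diffeomorphism at the corresponding point. -/
theorem mulMap_local_diffeomorphism (m n : ℕ) (hm : 1 ≤ m) (hn : 1 ≤ n)
    (u₀ : Fin m → ℝ) (v₀ : Fin n → ℝ)
    (hcop : ∀ z : ℂ, ¬ (aeval z (toMonicPoly m u₀) = 0 ∧ aeval z (toMonicPoly n v₀) = 0)) :
    ∃ (U : Set ((Fin m → ℝ) × (Fin n → ℝ))) (V : Set (Fin (m + n) → ℝ))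
      (g : (Fin (m + n) → ℝ) → (Fin m → ℝ) × (Fin n → ℝ)),
      IsOpen U ∧ IsOpen V ∧ (u₀, v₀) ∈ U ∧
      Set.BijOn (mulMap m n) U V ∧
      ContDiffOn ℝ (⊤ : ℕ∞) (mulMap m n) U ∧
      ContDiffOn ℝ (⊤ : ℕ∞) g V ∧
      Set.InvOn g (mulMap m n) U V := by
  classical
  set E := (Fin m → ℝ) × (Fin n → ℝ)
  set F := Fin (m + n) → ℝ
  set f := mulMap m n with hf
  set x₀ : E := (u₀, v₀) with hx₀
  -- the invertible derivative at the base point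
  have hcop' : IsCoprime (toMonicPoly m u₀) (toMonicPoly n v₀) :=
    isCoprime_of_no_common_root (toMonicPoly_ne_zero m u₀) hcop
  have hrank : Module.finrank ℝ E = Module.finrank ℝ F := by
    simp [E, F, Module.finrank_prod]
  set e : E ≃ₗ[ℝ] F :=
    (mmT m n u₀ v₀).linearEquivOfInjective (mmT_injective m n u₀ v₀ hcop') hrank with he
  set eC : E ≃L[ℝ] F := e.toContinuousLinearEquiv with heC
  have heCcoe : (eC : E →L[ℝ] F) = LinearMap.toContinuousLinearMap (mmT m n u₀ v₀) := by
    refine ContinuousLinearMap.ext fun x => ?_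
    show eC x = mmT m n u₀ v₀ x
    rw [heC, LinearEquiv.coe_toContinuousLinearEquiv']
    exact (mmT m n u₀ v₀).linearEquivOfInjective_apply _ hrank x
  have hcd : ContDiff ℝ (⊤ : ℕ∞) f := contDiff_mulMap m n
  have hder : HasFDerivAt f (eC : E →L[ℝ] F) x₀ := by
    rw [heCcoe]; exact hasFDerivAt_mulMap_T m n (u₀, v₀)
  -- the set where the derivative is invertible
  have hfderiv_cont : Continuous fun x => fderiv ℝ f x := hcd.continuous_fderiv (by simp)
  set χ : (E →L[ℝ] F) → ℝ := fun L => ((eC.symm : F →L[ℝ] E).comp L).det with hχ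
  have hχcont : Continuous χ := by
    exact ContinuousLinearMap.continuous_det.comp
      ((ContinuousLinearMap.compL ℝ E F E (eC.symm : F →L[ℝ] E)).continuous)
  set N : Set E := {x | χ (fderiv ℝ f x) ≠ 0} with hN
  have hNopen : IsOpen N := by
    have h : N = (fun x => χ (fderiv ℝ f x)) ⁻¹' ({0}ᶜ) := rfl
    rw [h]
    exact (hχcont.comp hfderiv_cont).isOpen_preimage _ isOpen_compl_singleton
  have hx₀N : x₀ ∈ N := by
    have h1 : fderiv ℝ f x₀ = (eC : E →L[ℝ] F) := hder.fderiv
    have h2 : (eC.symm : F →L[ℝ] E).comp (eC : E →L[ℝ] F) = ContinuousLinearMap.id ℝ E := by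
      refine ContinuousLinearMap.ext fun x => ?_
      simp
    simp only [hN, Set.mem_setOf_eq, hχ, h1, h2]
    rw [ContinuousLinearMap.det]
    simp [LinearMap.det_id]
  -- invertible derivative at every point of N
  have hinv : ∀ x ∈ N, ∃ ex : E ≃L[ℝ] F, (ex : E →L[ℝ] F) = fderiv ℝ f x := by
    intro x hx
    set G := (eC.symm : F →L[ℝ] E).comp (fderiv ℝ f x) with hG
    have hdet : G.det ≠ 0 := hx
    refine ⟨(G.toContinuousLinearEquivOfDetNeZero hdet).trans eC, ?_⟩
    refine ContinuousLinearMap.ext fun y => ?_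
    show eC (G.toContinuousLinearEquivOfDetNeZero hdet y) = fderiv ℝ f x y
    rw [ContinuousLinearMap.toContinuousLinearEquivOfDetNeZero_apply]
    rw [hG]
    exact eC.apply_symm_apply _
  -- inverse function theorem at the base point
  have hca : ContDiffAt ℝ (⊤ : ℕ∞) f x₀ := hcd.contDiffAt
  set Ψ := hca.toOpenPartialHomeomorph f hder (by simp) with hΨ
  have hΨcoe : (Ψ : E → F) = f := rfl
  have hx₀src : x₀ ∈ Ψ.source := hca.mem_toOpenPartialHomeomorph_source hder (by simp)
  set U : Set E := Ψ.source ∩ N with hU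
  have hUopen : IsOpen U := Ψ.open_source.inter hNopen
  have hUsub : U ⊆ Ψ.source := Set.inter_subset_left
  set V : Set F := Ψ.target ∩ Ψ.symm ⁻¹' U with hV
  have hVopen : IsOpen V := Ψ.symm.isOpen_inter_preimage hUopen
  have himg : f '' U = V := by
    rw [← hΨcoe]
    exact Ψ.image_eq_target_inter_inv_preimage hUsub
  have hinjU : Set.InjOn f U := by
    rw [← hΨcoe]
    exact Ψ.injOn.mono hUsub
  refine ⟨U, V, (Ψ.symm : F → E), hUopen, hVopen, ⟨hx₀src, hx₀N⟩, ?_, hcd.contDiffOn, ?_, ?_⟩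
  · exact himg ▸ hinjU.bijOn_image
  · -- smoothness of the inverse
    intro y hy
    have hyT : y ∈ Ψ.target := hy.1
    have hxU : Ψ.symm y ∈ U := hy.2
    set x := Ψ.symm y with hxdef
    have hfx : f x = y := Ψ.right_inv hyT
    obtain ⟨ex, hex⟩ := hinv x hxU.2
    have hcax : ContDiffAt ℝ (⊤ : ℕ∞) f x := hcd.contDiffAt
    have hderx : HasFDerivAt f ((ex : E →L[ℝ] F)) x := by
      rw [hex]
      exact (hcd.differentiable (by simp) x).hasFDerivAt
    have hloc : ContDiffAt ℝ (⊤ : ℕ∞) (hcax.localInverse hderx (by simp)) (f x) :=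
      hcax.to_localInverse hderx (by simp)
    set Ψx := hcax.toOpenPartialHomeomorph f hderx (by simp) with hΨx
    have hloceq : hcax.localInverse hderx (by simp) = (Ψx.symm : F → E) := rfl
    have hloc' : ContDiffAt ℝ (⊤ : ℕ∞) (Ψx.symm : F → E) y := by
      rw [← hloceq, ← hfx]
      exact hloc
    have hxsrc : x ∈ Ψx.source := hcax.mem_toOpenPartialHomeomorph_source hderx (by simp)
    set W := Ψ.target ∩ Ψ.symm ⁻¹' (Ψ.source ∩ Ψx.source) with hW
    have hWopen : IsOpen W := Ψ.symm.isOpen_inter_preimage (Ψ.open_source.inter Ψx.open_source)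
    have hyW : y ∈ W := ⟨hyT, ⟨hUsub hxU, hxsrc⟩⟩
    have heq : Set.EqOn (Ψ.symm : F → E) (Ψx.symm : F → E) W := by
      intro y' hy'
      have h1 : Ψ.symm y' ∈ Ψx.source := hy'.2.2
      have h2 : f (Ψ.symm y') = y' := Ψ.right_inv hy'.1
      have h3 : (Ψx : E → F) = f := rfl
      calc Ψ.symm y' = Ψx.symm (Ψx (Ψ.symm y')) := (Ψx.left_inv h1).symm
        _ = Ψx.symm y' := by rw [show Ψx (Ψ.symm y') = y' from by rw [h3]; exact h2]
    exact (hloc'.congr_of_eventuallyEq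
      (Filter.eventuallyEq_of_mem (hWopen.mem_nhds hyW) heq)).contDiffWithinAt
  · have hL : Set.LeftInvOn (Ψ.symm : F → E) f U := fun x hx => Ψ.left_inv (hUsub hx)
    have hR : Set.RightInvOn (Ψ.symm : F → E) f V := fun y hy => Ψ.right_inv hy.1
    exact ⟨hL, hR⟩
end

section
/- For all a, b, c ∈ ℝ there exists D > 0 such that for every d > D, the polynomial x^5 + x^4 + a x^3 + b x^2 + c x + d has exactly one real root; this root is simple and negative. -/
open Polynomial Set

set_option maxRecDepth 8000 in
/-- For `a`, `b`, `c` fixed and `d > 0` large enough, the polynomial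
`x^5 + x^4 + a x^3 + b x^2 + c x + d` has exactly one real root, which is simple
and negative. -/
theorem one_negative_root_for_large_d (a b c : ℝ) :
    ∃ D > (0 : ℝ), ∀ d : ℝ, D < d →
      ∃ x₀ : ℝ, x₀ < 0 ∧
        (X ^ 5 + X ^ 4 + C a * X ^ 3 + C b * X ^ 2 + C c * X + C d : Polynomial ℝ).roots
          = {x₀} := by
  set R : ℝ := 1 + 3*|a| + 2*|b| + |c| with hR
  clear_value R
  have hR1 : (1:ℝ) ≤ R := by
    have := abs_nonneg a; have := abs_nonneg b; have := abs_nonneg c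
    rw [hR]; linarith
  set K : ℝ := R^5 + R^4 + |a| * R^3 + |b| * R^2 + |c| * R with hK
  clear_value K
  have hK0 : 0 ≤ K := by
    have h0R : (0:ℝ) ≤ R := by linarith
    have := abs_nonneg a; have := abs_nonneg b; have := abs_nonneg c
    rw [hK]; positivity
  refine ⟨K + 1, by linarith, fun d hd => ?_⟩
  have hd0 : 0 < d := by linarith
  set p : Polynomial ℝ := X ^ 5 + X ^ 4 + C a * X ^ 3 + C b * X ^ 2 + C c * X + C d with hp
  clear_value p
  have hdeg : p.natDegree = 5 := by rw [hp]; compute_degree!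
  have hp0 : p ≠ 0 := by intro h; rw [h] at hdeg; simp at hdeg
  have heval : ∀ x : ℝ, p.eval x = x^5 + x^4 + a*x^3 + b*x^2 + c*x + d := by
    intro x; simp [hp]
  have hderiv : p.derivative = C 5 * X^4 + C 4 * X^3 + C (3*a) * X^2 + C (2*b) * X + C c := by
    rw [hp]; simp [derivative_pow]; ring
  have hevald : ∀ x : ℝ, p.derivative.eval x = 5*x^4 + 4*x^3 + 3*a*x^2 + 2*b*x + c := by
    intro x; rw [hderiv]; simp; try ring
  -- derivative positive outside [-R, R]
  have hdpos : ∀ x : ℝ, R ≤ |x| → 0 < p.derivative.eval x := by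
    intro x hx
    rw [hevald]
    rcases abs_cases x with ⟨h1, _⟩ | ⟨h1, _⟩
    · rw [h1] at hx
      have hy1 : (1:ℝ) ≤ x := le_trans hR1 hx
      nlinarith [neg_abs_le a, le_abs_self a, neg_abs_le b, le_abs_self b, neg_abs_le c,
        le_abs_self c, mul_le_mul_of_nonneg_left hx (sq_nonneg x), sq_nonneg x,
        mul_le_mul_of_nonneg_left hy1 (sq_nonneg x),
        mul_le_mul_of_nonneg_left hy1 (mul_nonneg (by linarith : (0:ℝ) ≤ x) (sq_nonneg x))]
    · rw [h1] at hx
      have hy1 : (1:ℝ) ≤ -x := le_trans hR1 hx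
      nlinarith [neg_abs_le a, le_abs_self a, neg_abs_le b, le_abs_self b, neg_abs_le c,
        le_abs_self c, mul_le_mul_of_nonneg_left hx (sq_nonneg x), sq_nonneg x,
        mul_le_mul_of_nonneg_left hy1 (sq_nonneg x),
        mul_le_mul_of_nonneg_left hy1 (mul_nonneg (neg_nonneg.mpr (by linarith : x ≤ 0)) (sq_nonneg x))]
  -- value positive on [-R, R]
  have hmid : ∀ x : ℝ, |x| ≤ R → 0 < p.eval x := by
    intro x hx
    rw [heval]
    have h5 : -R^5 ≤ x^5 := by
      have h : |x^5| ≤ R^5 := by rw [abs_pow]; exact pow_le_pow_left₀ (abs_nonneg x) hx 5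
      linarith [(abs_le.mp h).1]
    have h4 : -R^4 ≤ x^4 := by
      have h : |x^4| ≤ R^4 := by rw [abs_pow]; exact pow_le_pow_left₀ (abs_nonneg x) hx 4
      linarith [(abs_le.mp h).1]
    have h3 : -(|a| * R^3) ≤ a*x^3 := by
      have h : |a*x^3| ≤ |a| * R^3 := by
        rw [abs_mul, abs_pow]
        exact mul_le_mul_of_nonneg_left (pow_le_pow_left₀ (abs_nonneg x) hx 3) (abs_nonneg a)
      linarith [(abs_le.mp h).1]
    have h2 : -(|b| * R^2) ≤ b*x^2 := by
      have h : |b*x^2| ≤ |b| * R^2 := by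
        rw [abs_mul, abs_pow]
        exact mul_le_mul_of_nonneg_left (pow_le_pow_left₀ (abs_nonneg x) hx 2) (abs_nonneg b)
      linarith [(abs_le.mp h).1]
    have h1 : -(|c| * R) ≤ c*x := by
      have h : |c*x| ≤ |c| * R := by
        rw [abs_mul]; exact mul_le_mul_of_nonneg_left hx (abs_nonneg c)
      linarith [(abs_le.mp h).1]
    have : K < d := by linarith
    rw [hK] at this
    linarith
  have hcont : Continuous fun x : ℝ => p.eval x := p.continuous
  have hderivAt : ∀ x : ℝ, HasDerivAt (fun x : ℝ => p.eval x) (p.derivative.eval x) x :=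
    fun x => p.hasDerivAt x
  -- strict mono on Iic (-R)
  have hmonoL : StrictMonoOn (fun x : ℝ => p.eval x) (Iic (-R)) := by
    apply strictMonoOn_of_deriv_pos (convex_Iic _) hcont.continuousOn
    intro x hx
    rw [interior_Iic, mem_Iio] at hx
    rw [(hderivAt x).deriv]
    exact hdpos x (by rw [abs_of_neg (by linarith)]; linarith)
  -- strict mono on Ici R
  have hmonoR : StrictMonoOn (fun x : ℝ => p.eval x) (Ici R) := by
    apply strictMonoOn_of_deriv_pos (convex_Ici _) hcont.continuousOn
    intro x hx
    rw [interior_Ici, mem_Ioi] at hx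
    rw [(hderivAt x).deriv]
    exact hdpos x (by rw [abs_of_pos (by linarith)]; linarith)
  -- all real roots are < -R
  have hroot_lt : ∀ y : ℝ, p.eval y = 0 → y < -R := by
    intro y hy
    by_contra h
    push_neg at h
    rcases le_or_gt y R with h2 | h2
    · exact absurd hy (ne_of_gt (hmid y (abs_le.mpr ⟨h, h2⟩)))
    · have := hmonoR (self_mem_Ici) (le_of_lt h2 : R ≤ y) h2
      have hpR : 0 < p.eval R := hmid R (by rw [abs_of_pos (by linarith)])
      simp only at this
      linarith [hy]
  -- negative value far left
  set S : ℝ := 2 + 3*|a| + 2*|b| + |c| + d with hS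
  clear_value S
  have hSR : R < S := by rw [hS, hR]; linarith
  have hS1 : (1:ℝ) ≤ S := by linarith
  have hneg : p.eval (-S) < 0 := by
    rw [heval]
    have e4 : S ≤ S^4 := le_self_pow₀ hS1 (by norm_num)
    have e34 : S^3 ≤ S^4 := pow_le_pow_right₀ hS1 (by norm_num)
    have e24 : S^2 ≤ S^4 := pow_le_pow_right₀ hS1 (by norm_num)
    nlinarith [neg_abs_le a, le_abs_self a, neg_abs_le b, le_abs_self b, neg_abs_le c,
      le_abs_self c, mul_le_mul_of_nonneg_left e34 (abs_nonneg a),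
      mul_le_mul_of_nonneg_left e24 (abs_nonneg b),
      mul_le_mul_of_nonneg_left e4 (abs_nonneg c), pow_pos (by linarith : (0:ℝ) < S) 4,
      mul_le_mul_of_nonneg_left e4 hd0.le]
  have hposR : 0 < p.eval (-R) := hmid (-R) (by rw [abs_of_neg (by linarith)]; simp)
  -- IVT
  obtain ⟨x₀, hx₀mem, hx₀⟩ :=
    intermediate_value_Icc (by linarith : -S ≤ -R) hcont.continuousOn
      ⟨le_of_lt hneg, le_of_lt hposR⟩
  replace hx₀ : p.eval x₀ = 0 := hx₀
  have hx₀R : x₀ < -R := hroot_lt x₀ hx₀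
  have hx₀neg : x₀ < 0 := by linarith
  -- uniqueness of the root
  have huniq : ∀ y : ℝ, p.eval y = 0 → y = x₀ := by
    intro y hy
    have hyR := hroot_lt y hy
    exact hmonoL.injOn (le_of_lt hyR) (le_of_lt hx₀R) (by rw [hy, hx₀])
  -- derivative nonzero at x₀ ⇒ simple root
  have hd0' : p.derivative.eval x₀ ≠ 0 :=
    ne_of_gt (hdpos x₀ (by rw [abs_of_neg (by linarith)]; linarith))
  -- factor out the root
  have hdvd : (X - C x₀) ∣ p := dvd_iff_isRoot.mpr hx₀
  obtain ⟨q, hq⟩ := hdvd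
  have hqx₀ : q.eval x₀ ≠ 0 := by
    intro h
    apply hd0'
    rw [hq, derivative_mul]
    simp [h]
  have hqroots : q.roots = 0 := by
    apply Multiset.eq_zero_of_forall_notMem
    intro y hy
    rw [mem_roots'] at hy
    have hyp : p.eval y = 0 := by rw [hq, eval_mul, hy.2, mul_zero]
    exact hqx₀ (huniq y hyp ▸ hy.2)
  refine ⟨x₀, hx₀neg, ?_⟩
  have : p.roots = {x₀} := by
    rw [hq, roots_mul (hq ▸ hp0), roots_X_sub_C, hqroots]
    simp
  exact this
end

section
/- There exists no monic real polynomial P = x^6 + a_5 x^5 + a_4 x^4 + a_3 x^3 + a_2 x^2 + a_1 x + a_0 with a_5 > 0, a_4 < 0, a_3 > 0, a_2 < 0, a_1 < 0, a_0 > 0 that has four distinct positive real roots and no negative real root. -/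
open Polynomial
set_option maxHeartbeats 1000000

lemma monic_quad_form (p : Polynomial ℝ) (h2 : p.natDegree = 2) (hm : p.Monic) :
    p = X ^ 2 + C (p.coeff 1) * X + C (p.coeff 0) := by
  have h1 : p.coeff 2 = 1 := by
    have := hm.leadingCoeff
    rwa [Polynomial.leadingCoeff, h2] at this
  ext n
  rcases n with _ | _ | _ | n
  · simp
  · simp
  · simp [h1, coeff_X_pow]
  · have hz : p.coeff (n + 3) = 0 := coeff_eq_zero_of_natDegree_lt (by omega)
    simp [hz, coeff_X_pow, coeff_C]

lemma expand_fact (r1 r2 r3 r4 b c : ℝ) :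
    (X - C r1) * (X - C r2) * (X - C r3) * (X - C r4) * (X ^ 2 + C b * X + C c) =
      X ^ 6 + C (b - (r1 + r2 + r3 + r4)) * X ^ 5
        + C (c - (r1 + r2 + r3 + r4) * b
            + (r1*r2 + r1*r3 + r1*r4 + r2*r3 + r2*r4 + r3*r4)) * X ^ 4
        + C (-(r1 + r2 + r3 + r4) * c
            + (r1*r2 + r1*r3 + r1*r4 + r2*r3 + r2*r4 + r3*r4) * b
            - (r1*r2*r3 + r1*r2*r4 + r1*r3*r4 + r2*r3*r4)) * X ^ 3
        + C ((r1*r2 + r1*r3 + r1*r4 + r2*r3 + r2*r4 + r3*r4) * c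
            - (r1*r2*r3 + r1*r2*r4 + r1*r3*r4 + r2*r3*r4) * b + r1*r2*r3*r4) * X ^ 2
        + C (-(r1*r2*r3 + r1*r2*r4 + r1*r3*r4 + r2*r3*r4) * c + r1*r2*r3*r4 * b) * X
        + C (r1*r2*r3*r4 * c) := by
  simp only [map_add, map_sub, map_mul, map_neg]
  ring

lemma coeff_extract (u5 u4 u3 u2 u1 u0 v5 v4 v3 v2 v1 v0 : ℝ)
    (h : (X:Polynomial ℝ) ^ 6 + C u5 * X ^ 5 + C u4 * X ^ 4 + C u3 * X ^ 3 + C u2 * X ^ 2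
          + C u1 * X + C u0
        = X ^ 6 + C v5 * X ^ 5 + C v4 * X ^ 4 + C v3 * X ^ 3 + C v2 * X ^ 2
          + C v1 * X + C v0) :
    u5 = v5 ∧ u2 = v2 ∧ u0 = v0 := by
  refine ⟨?_, ?_, ?_⟩
  · have := congrArg (fun p => Polynomial.coeff p 5) h
    simpa [coeff_X_pow, coeff_C] using this
  · have := congrArg (fun p => Polynomial.coeff p 2) h
    simpa [coeff_X_pow, coeff_C] using this
  · have := congrArg (fun p => Polynomial.coeff p 0) h
    simpa [coeff_X_pow, coeff_C] using this

lemma maclaurin4 (r1 r2 r3 r4 : ℝ) (h1 : 0 < r1) (h2 : 0 < r2) (h3 : 0 < r3) (h4 : 0 < r4) :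
    6 * (r1*r2*r3 + r1*r2*r4 + r1*r3*r4 + r2*r3*r4)
      ≤ (r1 + r2 + r3 + r4) * (r1*r2 + r1*r3 + r1*r4 + r2*r3 + r2*r4 + r3*r4) := by
  nlinarith [mul_nonneg h1.le (sq_nonneg (r2 - r3)), mul_nonneg h1.le (sq_nonneg (r2 - r4)),
    mul_nonneg h1.le (sq_nonneg (r3 - r4)), mul_nonneg h2.le (sq_nonneg (r1 - r3)),
    mul_nonneg h2.le (sq_nonneg (r1 - r4)), mul_nonneg h2.le (sq_nonneg (r3 - r4)),
    mul_nonneg h3.le (sq_nonneg (r1 - r2)), mul_nonneg h3.le (sq_nonneg (r1 - r4)),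
    mul_nonneg h3.le (sq_nonneg (r2 - r4)), mul_nonneg h4.le (sq_nonneg (r1 - r2)),
    mul_nonneg h4.le (sq_nonneg (r1 - r3)), mul_nonneg h4.le (sq_nonneg (r2 - r3))]

/-- There is no monic real degree 6 polynomial with sign pattern `(+,+,-,+,-,-,+)`
having four distinct (simple) positive roots and no negative root. -/
theorem no_deg6_sp_ppmpmmp_ap40 :
    ¬ ∃ (a5 a4 a3 a2 a1 a0 : ℝ) (P : Polynomial ℝ),
      0 < a5 ∧ a4 < 0 ∧ 0 < a3 ∧ a2 < 0 ∧ a1 < 0 ∧ 0 < a0 ∧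
      P = X ^ 6 + C a5 * X ^ 5 + C a4 * X ^ 4 + C a3 * X ^ 3 +
          C a2 * X ^ 2 + C a1 * X + C a0 ∧
      (P.roots.filter (fun x => 0 < x)).card = 4 ∧
      (P.roots.filter (fun x => 0 < x)).Nodup ∧
      (∀ x : ℝ, x < 0 → ¬ P.IsRoot x) := by
  rintro ⟨a5, a4, a3, a2, a1, a0, P, ha5, ha4, ha3, ha2, ha1, ha0, hP, hcard, hnodup, hneg⟩
  set m : Multiset ℝ := P.roots.filter (fun x => 0 < x) with hm
  -- extract four elements from m
  obtain ⟨r1, hr1m⟩ : ∃ a, a ∈ m := Multiset.card_pos_iff_exists_mem.mp (by rw [hcard]; norm_num)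
  have herase : (m.erase r1).card = 3 := by
    rw [Multiset.card_erase_of_mem hr1m, hcard]
    rfl
  obtain ⟨r2, r3, r4, h234⟩ := Multiset.card_eq_three.mp herase
  have hmeq : m = {r1, r2, r3, r4} := by
    rw [← Multiset.cons_erase hr1m, h234]; rfl
  have hr2m : r2 ∈ m := Multiset.mem_of_mem_erase (by rw [h234]; simp)
  have hr3m : r3 ∈ m := Multiset.mem_of_mem_erase (by rw [h234]; simp)
  have hr4m : r4 ∈ m := Multiset.mem_of_mem_erase (by rw [h234]; simp)
  have hpos : ∀ x ∈ m, (0:ℝ) < x := fun x hx => (Multiset.mem_filter.mp hx).2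
  have hp1 := hpos r1 hr1m
  have hp2 := hpos r2 hr2m
  have hp3 := hpos r3 hr3m
  have hp4 := hpos r4 hr4m
  -- divisibility
  have hle : m ≤ P.roots := Multiset.filter_le _ _
  have hdvd : ((m.map fun a => X - C a).prod) ∣ P :=
    (Multiset.prod_dvd_prod_of_le (Multiset.map_le_map hle)).trans P.prod_multiset_X_sub_C_dvd
  have hmprod : ((m.map fun a => X - C a).prod)
      = (X - C r1) * (X - C r2) * (X - C r3) * (X - C r4) := by
    rw [hmeq]
    simp only [Multiset.insert_eq_cons, Multiset.map_cons, Multiset.map_singleton,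
      Multiset.prod_cons, Multiset.prod_singleton]
    ring
  rw [hmprod] at hdvd
  obtain ⟨Q, hQ⟩ := hdvd
  -- degrees & monicity
  have hPmon : P.Monic := by rw [hP]; monicity!
  have hPdeg : P.natDegree = 6 := by rw [hP]; compute_degree!
  have hRmon : ((X - C r1) * (X - C r2) * (X - C r3) * (X - C r4)).Monic :=
    (((monic_X_sub_C r1).mul (monic_X_sub_C r2)).mul (monic_X_sub_C r3)).mul (monic_X_sub_C r4)
  have hQmon : Q.Monic := hRmon.of_mul_monic_left (hQ ▸ hPmon)
  have hRdeg : ((X - C r1) * (X - C r2) * (X - C r3) * (X - C r4)).natDegree = 4 := by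
    rw [(((monic_X_sub_C r1).mul (monic_X_sub_C r2)).mul (monic_X_sub_C r3)).natDegree_mul
        (monic_X_sub_C r4),
      ((monic_X_sub_C r1).mul (monic_X_sub_C r2)).natDegree_mul (monic_X_sub_C r3),
      (monic_X_sub_C r1).natDegree_mul (monic_X_sub_C r2)]
    simp [natDegree_X_sub_C]
  have hQdeg : Q.natDegree = 2 := by
    have h6 := hPdeg
    rw [hQ, hRmon.natDegree_mul hQmon, hRdeg] at h6
    omega
  set b : ℝ := Q.coeff 1 with hb
  set c : ℝ := Q.coeff 0 with hc
  have hQform : Q = X ^ 2 + C b * X + C c := monic_quad_form Q hQdeg hQmon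
  -- factorization identity in explicit form
  have hfact : X ^ 6 + C a5 * X ^ 5 + C a4 * X ^ 4 + C a3 * X ^ 3 +
          C a2 * X ^ 2 + C a1 * X + C a0
      = (X - C r1) * (X - C r2) * (X - C r3) * (X - C r4) * (X ^ 2 + C b * X + C c) := by
    rw [← hP, ← hQform, hQ]
  have hfact2 := hfact
  rw [expand_fact] at hfact2
  obtain ⟨e5, e2, e0⟩ := coeff_extract _ _ _ _ _ _ _ _ _ _ _ _ hfact2
  -- scalar notation
  set s1 : ℝ := r1 + r2 + r3 + r4 with hs1
  set s2 : ℝ := r1*r2 + r1*r3 + r1*r4 + r2*r3 + r2*r4 + r3*r4 with hs2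
  set s3 : ℝ := r1*r2*r3 + r1*r2*r4 + r1*r3*r4 + r2*r3*r4 with hs3
  set s4 : ℝ := r1*r2*r3*r4 with hs4
  have hs1pos : 0 < s1 := by positivity
  have hs2pos : 0 < s2 := by positivity
  have hs3pos : 0 < s3 := by positivity
  have hs4pos : 0 < s4 := by positivity
  have hmac : 6 * s3 ≤ s1 * s2 := maclaurin4 r1 r2 r3 r4 hp1 hp2 hp3 hp4
  -- b > s1 > 0, c > 0
  have hbgt : s1 < b := by linarith [e5]
  have hbpos : 0 < b := lt_trans hs1pos hbgt
  have hcpos : 0 < c := by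
    by_contra h
    push_neg at h
    nlinarith [e0]
  -- discriminant positive
  have hkey : s2 * c < b * s3 - s4 := by nlinarith [e2]
  have hdisc : 4 * c < b ^ 2 := by
    have h1 : 6 * s3 * b ≤ s1 * s2 * b := mul_le_mul_of_nonneg_right hmac hbpos.le
    have h2 : s1 * s2 * b < b * s2 * b := by
      have := mul_lt_mul_of_pos_right (mul_lt_mul_of_pos_right hbgt hs2pos) hbpos
      linarith
    nlinarith
  -- construct negative root
  set d : ℝ := Real.sqrt (b ^ 2 - 4 * c) with hd
  have hdsq : d ^ 2 = b ^ 2 - 4 * c := Real.sq_sqrt (by linarith)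
  have hdnn : 0 ≤ d := Real.sqrt_nonneg _
  set x0 : ℝ := (-b - d) / 2 with hx0
  have hx0neg : x0 < 0 := by
    rw [hx0]
    apply div_neg_of_neg_of_pos _ (by norm_num)
    linarith
  have hQ0 : x0 ^ 2 + b * x0 + c = 0 := by
    have h : x0 ^ 2 + b * x0 + c = (d ^ 2 - (b ^ 2 - 4 * c)) / 4 := by rw [hx0]; ring
    rw [h, hdsq]; ring
  have hroot : P.IsRoot x0 := by
    show P.eval x0 = 0
    rw [hP, hfact]
    simp only [eval_mul, eval_add, eval_pow, eval_sub, eval_X, eval_C]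
    linear_combination ((x0 - r1) * (x0 - r2) * (x0 - r3) * (x0 - r4)) * hQ0
  exact hneg x0 hx0neg hroot
end

section
/- There exists no monic real polynomial P = x^6 + a_5 x^5 + a_4 x^4 + a_3 x^3 + a_2 x^2 + a_1 x + a_0 with a_5 > 0, a_4 < 0, a_3 > 0, a_2 < 0, a_1 > 0, a_0 > 0 that has exactly two positive real roots, both simple, and no negative real root. -/
open Polynomial

/-- There is no monic real degree 6 polynomial with sign pattern `(+,+,-,+,-,+,+)`
having exactly two positive roots, both simple, and no negative root. -/
theorem no_deg6_sp_ppmpmpp_ap20 :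
    ¬ ∃ (a5 a4 a3 a2 a1 a0 : ℝ) (P : Polynomial ℝ),
      0 < a5 ∧ a4 < 0 ∧ 0 < a3 ∧ a2 < 0 ∧ 0 < a1 ∧ 0 < a0 ∧
      P = X ^ 6 + C a5 * X ^ 5 + C a4 * X ^ 4 + C a3 * X ^ 3 +
          C a2 * X ^ 2 + C a1 * X + C a0 ∧
      (P.roots.filter (fun x => 0 < x)).card = 2 ∧
      (P.roots.filter (fun x => 0 < x)).Nodup ∧
      (∀ x : ℝ, x < 0 → ¬ P.IsRoot x) := by
  rintro ⟨a5, a4, a3, a2, a1, a0, P, h5, h4, h3, h2, h1, h0, hP, hcard, hnodup, hneg⟩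
  -- extract a positive root u
  have hne : (P.roots.filter (fun x => 0 < x)) ≠ 0 := by
    intro h
    rw [h] at hcard
    simp at hcard
  obtain ⟨u, hu⟩ := Multiset.exists_mem_of_ne_zero hne
  rw [Multiset.mem_filter] at hu
  obtain ⟨humem, hupos⟩ := hu
  have hPu : P.eval u = 0 := (Polynomial.isRoot_of_mem_roots humem)
  have hevalu : u^6 + a5*u^5 + a4*u^4 + a3*u^3 + a2*u^2 + a1*u + a0 = 0 := by
    rw [hP] at hPu
    simpa [eval_add, eval_mul, eval_pow] using hPu
  -- P(-u) < 0
  have hPmu : P.eval (-u) < 0 := by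
    rw [hP]
    simp only [eval_add, eval_mul, eval_pow, eval_C, eval_X]
    have key : (-u)^6 + a5*(-u)^5 + a4*(-u)^4 + a3*(-u)^3 + a2*(-u)^2 + a1*(-u) + a0
        = (u^6 + a5*u^5 + a4*u^4 + a3*u^3 + a2*u^2 + a1*u + a0)
          - 2*(a5*u^5 + a3*u^3 + a1*u) := by ring
    have hpos : 0 < a5*u^5 + a3*u^3 + a1*u := by positivity
    nlinarith [key, hevalu]
  -- P(-t) > 0 for t large
  set S : ℝ := a5 - a4 + a3 - a2 + a1 with hS
  set t : ℝ := max (u+1) (S+1) with ht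
  have hS0 : 0 < S := by simp only [hS]; linarith
  have ht1 : 1 ≤ t := le_trans (by linarith) (le_max_right _ _)
  have htS : S + 1 ≤ t := le_max_right _ _
  have htu : u < t := lt_of_lt_of_le (lt_add_one u) (le_max_left _ _)
  have h54 : t^4 ≤ t^5 := pow_le_pow_right₀ ht1 (by norm_num)
  have h53 : t^3 ≤ t^5 := pow_le_pow_right₀ ht1 (by norm_num)
  have h52 : t^2 ≤ t^5 := pow_le_pow_right₀ ht1 (by norm_num)
  have h51 : t^1 ≤ t^5 := pow_le_pow_right₀ ht1 (by norm_num)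
  have h5pos : (0:ℝ) < t^5 := by positivity
  have hPt : 0 < P.eval (-t) := by
    rw [hP]
    simp only [eval_add, eval_mul, eval_pow, eval_C, eval_X]
    have e1 : a4 * t^5 ≤ a4 * t^4 := by nlinarith
    have e2 : a2 * t^5 ≤ a2 * t^2 := by nlinarith
    have e3 : a3 * t^3 ≤ a3 * t^5 := by nlinarith
    have e4 : a1 * t^1 ≤ a1 * t^5 := by nlinarith
    have e5 : t^5 * (S + 1) ≤ t^5 * t := by nlinarith
    have e6 : t^5 * t = t^6 := by ring
    have eS : t^5 * (S + 1) = a5*t^5 - a4*t^5 + a3*t^5 - a2*t^5 + a1*t^5 + t^5 := by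
      rw [hS]; ring
    have hrw : (-t)^6 + a5*(-t)^5 + a4*(-t)^4 + a3*(-t)^3 + a2*(-t)^2 + a1*(-t) + a0
        = t^6 - a5*t^5 + a4*t^4 - a3*t^3 + a2*t^2 - a1*t^1 + a0 := by ring
    rw [hrw]
    linarith
  -- IVT gives a negative root
  have hcont : ContinuousOn (fun x => P.eval x) (Set.Icc (-t) (-u)) :=
    P.continuous.continuousOn
  have hle : (-t) ≤ (-u) := by linarith
  have hmem : (0:ℝ) ∈ Set.Icc (P.eval (-u)) (P.eval (-t)) :=
    ⟨le_of_lt hPmu, le_of_lt hPt⟩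
  obtain ⟨c, hc, hc0⟩ := intermediate_value_Icc' hle hcont hmem
  have hcneg : c < 0 := lt_of_le_of_lt hc.2 (by linarith)
  exact hneg c hcneg hc0
end

section
/- There exists no monic real polynomial P = x^6 + a_5 x^5 + a_4 x^4 + a_3 x^3 + a_2 x^2 + a_1 x + a_0 with a_5 > 0, a_4 < 0, a_3 > 0, a_2 < 0, a_1 > 0, a_0 > 0 that has four distinct positive real roots and no negative real root. -/
open Polynomial

lemma monic_deg2_eq (R : ℝ[X]) (h2 : R.natDegree = 2) (hm : R.Monic) :
    R = X^2 + C (R.coeff 1) * X + C (R.coeff 0) := by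
  ext n
  have h3 : ∀ m, 2 < m → R.coeff m = 0 := fun m hm' =>
    coeff_eq_zero_of_natDegree_lt (h2 ▸ hm')
  rcases n with _ | _ | _ | n
  · simp
  · simp
  · have : R.coeff 2 = 1 := by
      have := hm.coeff_natDegree
      rwa [h2] at this
    simp [this]
  · rw [h3 (n+3) (by omega)]
    simp [coeff_X_pow, coeff_C]

lemma newton4 (r1 r2 r3 r4 : ℝ) :
    9*(r1+r2+r3+r4)*(r1*r2*r3 + r1*r2*r4 + r1*r3*r4 + r2*r3*r4) ≤
    4*(r1*r2 + r1*r3 + r1*r4 + r2*r3 + r2*r4 + r3*r4)^2 := by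
  nlinarith [sq_nonneg (r1*r2-r3*r4), sq_nonneg (r1*r3-r2*r4), sq_nonneg (r1*r4-r2*r3),
    sq_nonneg (r1*r2+r3*r4-r1*r3-r2*r4), sq_nonneg (r1*r2+r3*r4-r1*r4-r2*r3),
    sq_nonneg (r1*r3+r2*r4-r1*r4-r2*r3),
    sq_nonneg (r1-r2), sq_nonneg (r1-r3), sq_nonneg (r1-r4), sq_nonneg (r2-r3),
    sq_nonneg (r2-r4), sq_nonneg (r3-r4)]

lemma coeffs_eq {u5 u4 u3 u2 u1 u0 v5 v4 v3 v2 v1 v0 : ℝ}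
    (h : X^6 + C u5*X^5 + C u4*X^4 + C u3*X^3 + C u2*X^2 + C u1*X + C u0
       = X^6 + C v5*X^5 + C v4*X^4 + C v3*X^3 + C v2*X^2 + C v1*X + C v0) :
    u5 = v5 ∧ u4 = v4 ∧ u3 = v3 ∧ u2 = v2 ∧ u1 = v1 ∧ u0 = v0 := by
  refine ⟨?_, ?_, ?_, ?_, ?_, ?_⟩
  · have := congrArg (fun p => coeff p 5) h; simpa [coeff_X_pow] using this
  · have := congrArg (fun p => coeff p 4) h; simpa [coeff_X_pow] using this
  · have := congrArg (fun p => coeff p 3) h; simpa [coeff_X_pow] using this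
  · have := congrArg (fun p => coeff p 2) h; simpa [coeff_X_pow] using this
  · have := congrArg (fun p => coeff p 1) h; simpa [coeff_X_pow] using this
  · have := congrArg (fun p => coeff p 0) h; simpa [coeff_X_pow] using this

set_option maxHeartbeats 1600000 in
/-- There is no monic real degree 6 polynomial with sign pattern `(+,+,-,+,-,+,+)`
having four distinct (simple) positive roots and no negative root. -/
theorem no_deg6_sp_ppmpmpp_ap40 :
    ¬ ∃ (a5 a4 a3 a2 a1 a0 : ℝ) (P : Polynomial ℝ),
      0 < a5 ∧ a4 < 0 ∧ 0 < a3 ∧ a2 < 0 ∧ 0 < a1 ∧ 0 < a0 ∧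
      P = X ^ 6 + C a5 * X ^ 5 + C a4 * X ^ 4 + C a3 * X ^ 3 +
          C a2 * X ^ 2 + C a1 * X + C a0 ∧
      (P.roots.filter (fun x => 0 < x)).card = 4 ∧
      (P.roots.filter (fun x => 0 < x)).Nodup ∧
      (∀ x : ℝ, x < 0 → ¬ P.IsRoot x) := by
  rintro ⟨a5, a4, a3, a2, a1, a0, P, ha5, ha4, ha3, ha2, ha1, ha0, hP, hcard, hnodup, hneg⟩
  set s : Multiset ℝ := P.roots.filter (fun x => 0 < x) with hs
  -- extract the four roots
  have hlen : s.toList.length = 4 := by rw [Multiset.length_toList]; exact hcard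
  obtain ⟨r1, r2, r3, r4, hl⟩ : ∃ r1 r2 r3 r4, s.toList = [r1, r2, r3, r4] := by
    rcases hL : s.toList with _ | ⟨r1, _ | ⟨r2, _ | ⟨r3, _ | ⟨r4, _ | ⟨r5, l⟩⟩⟩⟩⟩ <;>
      rw [hL] at hlen <;> first
        | exact ⟨r1, r2, r3, r4, rfl⟩
        | simp at hlen
  have hsl : s = (↑[r1, r2, r3, r4] : Multiset ℝ) := by
    rw [← Multiset.coe_toList s, hl]
  -- positivity and root facts
  have hPne : P ≠ 0 := by
    intro h0
    rw [hs, h0] at hcard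
    simp at hcard
  have hmem : ∀ r ∈ ([r1, r2, r3, r4] : List ℝ), 0 < r ∧ P.IsRoot r := by
    intro r hr
    have : r ∈ s := by rw [hsl]; exact_mod_cast hr
    rw [hs, Multiset.mem_filter] at this
    exact ⟨this.2, (mem_roots hPne).mp this.1⟩
  obtain ⟨hr1, hR1⟩ := hmem r1 (by simp)
  obtain ⟨hr2, hR2⟩ := hmem r2 (by simp)
  obtain ⟨hr3, hR3⟩ := hmem r3 (by simp)
  obtain ⟨hr4, hR4⟩ := hmem r4 (by simp)
  -- Q divides P
  set Q : ℝ[X] := (X - C r1) * (X - C r2) * (X - C r3) * (X - C r4) with hQ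
  have hQdvd : Q ∣ P := by
    have h1 : s.map (fun a => X - C a) ≤ P.roots.map (fun a => X - C a) :=
      Multiset.map_le_map (Multiset.filter_le _ _)
    have h2 : (s.map (fun a => X - C a)).prod ∣ (P.roots.map (fun a => X - C a)).prod :=
      Multiset.prod_dvd_prod_of_le h1
    have h3 := prod_multiset_X_sub_C_dvd P
    have h4 : (s.map (fun a => X - C a)).prod = Q := by
      rw [hsl]
      simp [hQ]
      ring
    rw [h4] at h2
    exact h2.trans h3
  obtain ⟨R, hPR⟩ := hQdvd
  -- degrees and monicity
  have hQmonic : Q.Monic := by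
    apply Monic.mul
    apply Monic.mul
    apply Monic.mul
    all_goals exact monic_X_sub_C _
  have hQdeg : Q.natDegree = 4 := by
    rw [hQ]
    compute_degree!
  have hPmonic : P.Monic := by
    rw [hP]
    monicity!
  have hPdeg : P.natDegree = 6 := by
    rw [hP]
    compute_degree!
  have hRne : R ≠ 0 := by
    intro h0; rw [h0, mul_zero] at hPR; exact hPne hPR
  have hRmonic : R.Monic := by
    have := hPmonic
    rw [hPR] at this
    exact hQmonic.of_mul_monic_left this
  have hRdeg : R.natDegree = 2 := by
    have := hPdeg
    rw [hPR, natDegree_mul (hQmonic.ne_zero) hRne, hQdeg] at this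
    omega
  obtain ⟨b, hbdef⟩ : ∃ b, R.coeff 1 = b := ⟨_, rfl⟩
  obtain ⟨c, hcdef⟩ : ∃ c, R.coeff 0 = c := ⟨_, rfl⟩
  have hRe : R = X^2 + C b * X + C c := by
    rw [← hbdef, ← hcdef]; exact monic_deg2_eq R hRdeg hRmonic
  -- R has no real roots
  have hRnoroot : ∀ t : ℝ, ¬ R.IsRoot t := by
    intro t ht
    have hPt : P.IsRoot t := by
      rw [hPR]
      simp [IsRoot, ht.eq_zero]
    have ht0 : t ≠ 0 := by
      intro h0
      rw [h0] at hPt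
      rw [hP] at hPt
      simp [IsRoot] at hPt
      linarith
    have htpos : 0 < t := by
      rcases lt_trichotomy t 0 with h | h | h
      · exact absurd hPt (hneg t h)
      · exact absurd h ht0
      · exact h
    have hts : t ∈ s := by
      rw [hs, Multiset.mem_filter]
      exact ⟨(mem_roots hPne).mpr hPt, htpos⟩
    have hQt : Q.IsRoot t := by
      have : t = r1 ∨ t = r2 ∨ t = r3 ∨ t = r4 := by
        rw [hsl] at hts
        simpa using hts
      rcases this with h | h | h | h <;> subst h <;> simp [hQ, IsRoot]
    -- count t in P.roots ≥ 2 contradicts Nodup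
    have hcount : s.count t ≤ 1 := Multiset.nodup_iff_count_le_one.mp hnodup t
    have hcs : s.count t = P.roots.count t := by
      rw [hs, Multiset.count_filter_of_pos htpos]
    have hroots : P.roots = Q.roots + R.roots := by
      rw [hPR, roots_mul (by rw [← hPR]; exact hPne)]
    have h1Q : 1 ≤ Q.roots.count t :=
      Multiset.one_le_count_iff_mem.mpr ((mem_roots hQmonic.ne_zero).mpr hQt)
    have h1R : 1 ≤ R.roots.count t :=
      Multiset.one_le_count_iff_mem.mpr ((mem_roots hRne).mpr ht)
    rw [hcs, hroots, Multiset.count_add] at hcount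
    omega
  -- hence discriminant negative : b^2 < 4c
  have hb2c : b^2 < 4 * c := by
    by_contra h
    push_neg at h
    set d := Real.sqrt (b^2 - 4*c) with hd
    have hd2 : d^2 = b^2 - 4*c := Real.sq_sqrt (by linarith)
    apply hRnoroot ((-b + d)/2)
    rw [hRe]
    simp [IsRoot]
    nlinarith [hd2]
  -- elementary symmetric functions
  obtain ⟨e1, he1⟩ : ∃ e1, e1 = r1 + r2 + r3 + r4 := ⟨_, rfl⟩
  obtain ⟨e2, he2⟩ : ∃ e2, e2 = r1*r2 + r1*r3 + r1*r4 + r2*r3 + r2*r4 + r3*r4 := ⟨_, rfl⟩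
  obtain ⟨e3, he3⟩ : ∃ e3, e3 = r1*r2*r3 + r1*r2*r4 + r1*r3*r4 + r2*r3*r4 := ⟨_, rfl⟩
  obtain ⟨e4, he4⟩ : ∃ e4, e4 = r1*r2*r3*r4 := ⟨_, rfl⟩
  -- the coefficient identities
  have hexp : P = X^6 + C (b - e1) * X^5 + C (c - b*e1 + e2) * X^4
      + C (b*e2 - c*e1 - e3) * X^3 + C (c*e2 - b*e3 + e4) * X^2
      + C (b*e4 - c*e3) * X + C (c*e4) := by
    rw [hPR, hRe, hQ, he1, he2, he3, he4]
    simp only [C_add, C_sub, C_mul]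
    ring
  rw [hP] at hexp
  obtain ⟨h5, h4, h3, h2, h1, h0⟩ := coeffs_eq hexp
  clear_value s Q
  clear hexp hP hPR hRe hRnoroot hQmonic hQdeg hPmonic hPdeg hRne hRmonic hRdeg
    hbdef hcdef hR1 hR2 hR3 hR4 hmem hneg hPne hQ hl hsl hcard hnodup hs hlen s Q R P
  -- now derive the contradiction
  have he1pos : 0 < e1 := by rw [he1]; positivity
  have he2pos : 0 < e2 := by rw [he2]; positivity
  have he3pos : 0 < e3 := by rw [he3]; positivity
  have he4pos : 0 < e4 := by rw [he4]; positivity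
  -- Newton's inequality
  have hnewton : 9*e1*e3 ≤ 4*e2^2 := by
    rw [he1, he2, he3]; exact newton4 r1 r2 r3 r4
  clear he1 he2 he3 he4 hr1 hr2 hr3 hr4 r1 r2 r3 r4
  have hb1 : e1 < b := by linarith
  have hbpos : 0 < b := by linarith
  have hcpos : 0 < c := by nlinarith [sq_nonneg b]
  have hA : c + e2 < b * e1 := by linarith
  have hB : c*e2 + e4 < b*e3 := by linarith
  have hC : c*e3 < b*e4 := by linarith
  -- step A: b*e3 < 4*e4
  have hp3 : 0 < (4*c - b^2)*e3 := mul_pos (by linarith) he3pos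
  have hstepA : b*e3 < 4*e4 := by
    have h' : b*(b*e3) < b*(4*e4) := by nlinarith [hp3]
    exact lt_of_mul_lt_mul_left h' hbpos.le
  -- step B: b*e2 < 3*e3
  have hp2 : 0 < (4*c - b^2)*e2 := mul_pos (by linarith) he2pos
  have hstepB : b*e2 < 3*e3 := by
    have h' : b*(b*e2) < b*(3*e3) := by nlinarith [hp2]
    exact lt_of_mul_lt_mul_left h' hbpos.le
  -- step D: 3*b*e1 < 4*e2
  have hstepD : 3*b*e1 < 4*e2 := by
    have h' : e2*(3*b*e1) < e2*(4*e2) := by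
      nlinarith [mul_lt_mul_of_pos_left hstepB (by positivity : (0:ℝ) < 3*e1)]
    exact lt_of_mul_lt_mul_left h' he2pos.le
  -- step E: contradiction with e2 < (3/4)*b*e1
  nlinarith [mul_lt_mul_of_pos_left hb1 hbpos]
end

section
/- There exists no monic real polynomial P = x^6 + a_5 x^5 + a_4 x^4 + a_3 x^3 + a_2 x^2 + a_1 x + a_0 with a_5 > 0, a_4 < 0, a_3 > 0, a_2 > 0, a_1 > 0, a_0 > 0 that has exactly two positive real roots, both simple, and no negative real root. -/
/-!
Odd coefficients all positive means that, for `x > 0`, `P(-x) = P(x) - 2 (a₅x⁵ + a₃x³ + a₁x)`.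
So a positive root `α` gives `P(-α) < 0`, while `P(-x) → +∞` as `x → +∞` because the degree is even:
the intermediate value theorem yields a root below `-α`.
-/

open Polynomial Filter

theorem Polynomial.exists_isRoot_gt_of_eval_neg {P : ℝ[X]} (hdeg : 0 < P.degree)
    (hlc : 0 < P.leadingCoeff) {a : ℝ} (ha : P.eval a < 0) : ∃ x, a < x ∧ P.IsRoot x := by
  obtain ⟨t, ht, hta⟩ :=
    ((P.tendsto_atTop_of_leadingCoeff_nonneg hdeg hlc.le).eventually_gt_atTop 0
      |>.and (eventually_ge_atTop a)).exists
  obtain ⟨x, hx, hx0⟩ :=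
    intermediate_value_Ioo hta P.continuous.continuousOn (show (0 : ℝ) ∈ _ from ⟨ha, ht⟩)
  exact ⟨x, hx.1, hx0⟩

theorem Polynomial.exists_isRoot_lt_of_eval_neg {P : ℝ[X]} (heven : Even P.natDegree)
    (hdeg : 0 < P.natDegree) (hlc : 0 < P.leadingCoeff) {b : ℝ} (hb : P.eval b < 0) :
    ∃ x, x < b ∧ P.IsRoot x := by
  have hnegX : (-X : ℝ[X]).natDegree = 1 := by rw [natDegree_neg, natDegree_X]
  have hdeg' : 0 < (P.comp (-X)).degree := by
    rw [← natDegree_pos_iff_degree_pos, natDegree_comp, hnegX, mul_one]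
    exact hdeg
  have hlc' : 0 < (P.comp (-X)).leadingCoeff := by
    rw [leadingCoeff_comp (by rw [hnegX]; exact one_ne_zero), leadingCoeff_neg, leadingCoeff_X,
      heven.neg_one_pow, mul_one]
    exact hlc
  obtain ⟨y, hy, hroot⟩ :=
    exists_isRoot_gt_of_eval_neg hdeg' hlc' (a := -b) (by simpa using hb)
  exact ⟨-y, neg_lt.mp hy, by simpa using hroot⟩

theorem sextic_eval_neg_lt_zero {a5 a4 a3 a2 a1 a0 x : ℝ} (h5 : 0 < a5) (h3 : 0 < a3)
    (h1 : 0 < a1) (hx : 0 < x)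
    (hroot : x ^ 6 + a5 * x ^ 5 + a4 * x ^ 4 + a3 * x ^ 3 + a2 * x ^ 2 + a1 * x + a0 = 0) :
    (-x) ^ 6 + a5 * (-x) ^ 5 + a4 * (-x) ^ 4 + a3 * (-x) ^ 3 + a2 * (-x) ^ 2 + a1 * (-x) + a0
      < 0 := by
  have hodd : (-x) ^ 6 + a5 * (-x) ^ 5 + a4 * (-x) ^ 4 + a3 * (-x) ^ 3 + a2 * (-x) ^ 2
      + a1 * (-x) + a0 = -2 * (a5 * x ^ 5 + a3 * x ^ 3 + a1 * x) := by
    linear_combination hroot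
  rw [hodd]
  have : 0 < a5 * x ^ 5 + a3 * x ^ 3 + a1 * x := by positivity
  linarith

/-- There is no monic real degree 6 polynomial with sign pattern `(+,+,-,+,+,+,+)`
having exactly two positive roots, both simple, and no negative root. -/
theorem no_deg6_sp_ppmpppp_ap20 :
    ¬ ∃ (a5 a4 a3 a2 a1 a0 : ℝ) (P : Polynomial ℝ),
      0 < a5 ∧ a4 < 0 ∧ 0 < a3 ∧ 0 < a2 ∧ 0 < a1 ∧ 0 < a0 ∧
      P = X ^ 6 + C a5 * X ^ 5 + C a4 * X ^ 4 + C a3 * X ^ 3 +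
          C a2 * X ^ 2 + C a1 * X + C a0 ∧
      (P.roots.filter (fun x => 0 < x)).card = 2 ∧
      (P.roots.filter (fun x => 0 < x)).Nodup ∧
      (∀ x : ℝ, x < 0 → ¬ P.IsRoot x) := by
  rintro ⟨a5, a4, a3, a2, a1, a0, P, h5, -, h3, -, h1, -, hP, hcard, -, hneg⟩
  obtain ⟨α, hα⟩ := Multiset.card_pos_iff_exists_mem.mp (hcard ▸ two_pos)
  rw [Multiset.mem_filter, mem_roots'] at hα
  obtain ⟨⟨-, hroot⟩, hαpos⟩ := hα
  have hdeg : P.natDegree = 6 := by rw [hP]; compute_degree!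
  have hmonic : P.Monic := by rw [hP]; monicity!
  have hPα : P.eval (-α) < 0 := by
    simp only [hP, IsRoot, eval_add, eval_mul, eval_pow, eval_C, eval_X] at hroot ⊢
    exact sextic_eval_neg_lt_zero h5 h3 h1 hαpos hroot
  obtain ⟨x, hx, hxroot⟩ := exists_isRoot_lt_of_eval_neg (by rw [hdeg]; decide)
    (by rw [hdeg]; decide) (by rw [hmonic.leadingCoeff]; exact one_pos) hPα
  exact hneg x (hx.trans (neg_neg_of_pos hαpos)) hxroot
end
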